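/- arXiv:1912.08114 — 8 statements merged into one kernel-verified Lean document; each statement's English description precedes it below -/
import Mathlib

section
/- Let M be a numerical monoid and m ∈ M. Then the monotone catenary degree of m equals the maximum of the equivalent and adjacent catenary degrees of m: c_mon(m) = max{c_eq(m), c_adj(m)}. Consequently, c_mon(M) = max{c_eq(M), c_adj(M)}. -/
/-- The length of a factorization. -/
def fLen {k : ℕ} (z : Fin k → ℕ) : ℕ := ∑ i, z i

/-- The distance between two factorizations:
`max{|z|,|z'|} - |gcd(z,z')|` where the gcd is the coordinatewise minimum. -/
def fDist {k : ℕ} (z z' : Fin k → ℕ) : ℕ :=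
  max (fLen z) (fLen z') - ∑ i, min (z i) (z' i)

/-- The set of factorizations of `m` with respect to the generators `n`. -/
def Facts {k : ℕ} (n : Fin k → ℕ) (m : ℕ) : Set (Fin k → ℕ) :=
  {z | ∑ i, z i * n i = m}

/-- `z` and `z'` are joined by an `N`-chain of factorizations of `m`. -/
def Connects {k : ℕ} (n : Fin k → ℕ) (m N : ℕ) (z z' : Fin k → ℕ) : Prop :=
  ∃ t : ℕ, ∃ f : Fin (t + 1) → Fin k → ℕ,
    f 0 = z ∧ f (Fin.last t) = z' ∧ (∀ i, f i ∈ Facts n m) ∧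
    ∀ i : Fin t, fDist (f i.castSucc) (f i.succ) ≤ N

/-- `z` and `z'` are joined by an `N`-chain all of whose terms have length `|z|`. -/
def ConnectsEq {k : ℕ} (n : Fin k → ℕ) (m N : ℕ) (z z' : Fin k → ℕ) : Prop :=
  ∃ t : ℕ, ∃ f : Fin (t + 1) → Fin k → ℕ,
    f 0 = z ∧ f (Fin.last t) = z' ∧ (∀ i, f i ∈ Facts n m) ∧
    (∀ i, fLen (f i) = fLen z) ∧
    ∀ i : Fin t, fDist (f i.castSucc) (f i.succ) ≤ N

/-- `z` and `z'` are joined by a monotone `N`-chain (the lengths are weakly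
increasing or weakly decreasing along the chain). -/
def ConnectsMon {k : ℕ} (n : Fin k → ℕ) (m N : ℕ) (z z' : Fin k → ℕ) : Prop :=
  ∃ t : ℕ, ∃ f : Fin (t + 1) → Fin k → ℕ,
    f 0 = z ∧ f (Fin.last t) = z' ∧ (∀ i, f i ∈ Facts n m) ∧
    (Monotone (fun i => fLen (f i)) ∨ Antitone (fun i => fLen (f i))) ∧
    ∀ i : Fin t, fDist (f i.castSucc) (f i.succ) ≤ N

/-- The catenary degree of an element. -/
noncomputable def catDeg {k : ℕ} (n : Fin k → ℕ) (m : ℕ) : ℕ :=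
  sInf {N | ∀ z ∈ Facts n m, ∀ z' ∈ Facts n m, Connects n m N z z'}

/-- The equivalent catenary degree of an element. -/
noncomputable def catEq {k : ℕ} (n : Fin k → ℕ) (m : ℕ) : ℕ :=
  sInf {N | ∀ z ∈ Facts n m, ∀ z' ∈ Facts n m, fLen z = fLen z' → ConnectsEq n m N z z'}

/-- The monotone catenary degree of an element. -/
noncomputable def catMon {k : ℕ} (n : Fin k → ℕ) (m : ℕ) : ℕ :=
  sInf {N | ∀ z ∈ Facts n m, ∀ z' ∈ Facts n m, ConnectsMon n m N z z'}

/-- The set of lengths of factorizations of `m`. -/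
def LSet {k : ℕ} (n : Fin k → ℕ) (m : ℕ) : Set ℕ := fLen '' Facts n m

/-- Two lengths `a < b` in the length set of `m` are adjacent. -/
def AdjLen {k : ℕ} (n : Fin k → ℕ) (m a b : ℕ) : Prop :=
  a ∈ LSet n m ∧ b ∈ LSet n m ∧ a < b ∧
    ∀ l ∈ LSet n m, a ≤ l → l ≤ b → l = a ∨ l = b

/-- The adjacent catenary degree of an element: the least `N` such that for every
pair of adjacent lengths the minimum distance between the corresponding sets of
factorizations is at most `N`. -/
noncomputable def catAdj {k : ℕ} (n : Fin k → ℕ) (m : ℕ) : ℕ :=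
  sInf {N | ∀ a b : ℕ, AdjLen n m a b →
    ∃ z ∈ Facts n m, ∃ z' ∈ Facts n m, fLen z = a ∧ fLen z' = b ∧ fDist z z' ≤ N}

/-- Set-wise catenary degree: the maximum over all elements of the monoid. -/
noncomputable def catDegM {k : ℕ} (n : Fin k → ℕ) : ℕ := sSup (catDeg n '' {m | (Facts n m).Nonempty})

/-- Set-wise equivalent catenary degree. -/
noncomputable def catEqM {k : ℕ} (n : Fin k → ℕ) : ℕ := sSup (catEq n '' {m | (Facts n m).Nonempty})

/-- Set-wise adjacent catenary degree. -/
noncomputable def catAdjM {k : ℕ} (n : Fin k → ℕ) : ℕ := sSup (catAdj n '' {m | (Facts n m).Nonempty})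

/-- Set-wise monotone catenary degree. -/
noncomputable def catMonM {k : ℕ} (n : Fin k → ℕ) : ℕ := sSup (catMon n '' {m | (Facts n m).Nonempty})

namespace NumAux

variable {k : ℕ}

/-- value of a factorization -/
def fVal (n : Fin k → ℕ) (z : Fin k → ℕ) : ℕ := ∑ i, z i * n i

lemma mem_facts {n : Fin k → ℕ} {m : ℕ} {z : Fin k → ℕ} : z ∈ Facts n m ↔ fVal n z = m :=
  Iff.rfl

lemma fLen_add (x y : Fin k → ℕ) : fLen (x + y) = fLen x + fLen y := by
  simp [fLen, Finset.sum_add_distrib]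

lemma fVal_add (n x y : Fin k → ℕ) : fVal n (x + y) = fVal n x + fVal n y := by
  simp [fVal, add_mul, Finset.sum_add_distrib]

lemma fLen_mono {x y : Fin k → ℕ} (h : x ≤ y) : fLen x ≤ fLen y :=
  Finset.sum_le_sum fun i _ => h i

lemma fVal_mono {n x y : Fin k → ℕ} (h : x ≤ y) : fVal n x ≤ fVal n y :=
  Finset.sum_le_sum fun i _ => Nat.mul_le_mul_right _ (h i)

lemma fLen_sub_add {x z : Fin k → ℕ} (h : x ≤ z) : fLen (z - x) + fLen x = fLen z := by
  unfold fLen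
  rw [← Finset.sum_add_distrib]
  apply Finset.sum_congr rfl
  intro i _
  have h2 : x i ≤ z i := h i
  simp only [Pi.sub_apply]
  omega

lemma fVal_sub_add {n x z : Fin k → ℕ} (h : x ≤ z) : fVal n (z - x) + fVal n x = fVal n z := by
  unfold fVal
  rw [← Finset.sum_add_distrib]
  apply Finset.sum_congr rfl
  intro i _
  have h2 : x i ≤ z i := h i
  simp only [Pi.sub_apply]
  rw [← add_mul]
  congr 1
  omega

lemma fLen_eq_zero {x : Fin k → ℕ} (h : fLen x = 0) : x = 0 := by
  funext i
  have := Finset.sum_eq_zero_iff.mp (show ∑ i, x i = 0 from h) i (Finset.mem_univ i)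
  simpa using this

lemma swap_facts {n : Fin k → ℕ} {m : ℕ} {z x y : Fin k → ℕ} (hz : z ∈ Facts n m)
    (hx : x ≤ z) (hval : fVal n x = fVal n y) : z - x + y ∈ Facts n m := by
  have h1 := fVal_sub_add (n := n) hx
  have h2 := fVal_mono (n := n) hx
  rw [mem_facts] at *
  rw [fVal_add]
  omega

lemma fLen_swap {z x y : Fin k → ℕ} (hx : x ≤ z) :
    fLen (z - x + y) = fLen z - fLen x + fLen y := by
  have h1 := fLen_sub_add hx
  rw [fLen_add]; omega

lemma fDist_self (z : Fin k → ℕ) : fDist z z = 0 := by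
  simp [fDist, fLen]

lemma fDist_comm (z z' : Fin k → ℕ) : fDist z z' = fDist z' z := by
  rw [fDist, fDist, max_comm]
  congr 1
  exact Finset.sum_congr rfl fun i _ => min_comm _ _

lemma fDist_swap_le {z x y : Fin k → ℕ} (hx : x ≤ z) :
    fDist z (z - x + y) ≤ max (fLen x) (fLen y) := by
  have h1 : fLen z - fLen x ≤ ∑ i, min (z i) ((z - x + y) i) := by
    have hs : fLen (z - x) ≤ ∑ i, min (z i) ((z - x + y) i) := by
      apply Finset.sum_le_sum
      intro i _
      have h2 : x i ≤ z i := hx i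
      simp only [Pi.add_apply, Pi.sub_apply]
      omega
    have h2 := fLen_sub_add hx
    omega
  have h2 : fLen (z - x + y) = fLen z - fLen x + fLen y := fLen_swap hx
  have h3 : fLen x ≤ fLen z := fLen_mono hx
  have hm1 : fLen x ≤ max (fLen x) (fLen y) := le_max_left _ _
  have hm2 : fLen y ≤ max (fLen x) (fLen y) := le_max_right _ _
  rw [fDist, h2, Nat.sub_le_iff_le_add]
  apply max_le <;> omega

lemma fLen_le_facts {n : Fin k → ℕ} {m : ℕ} {z : Fin k → ℕ} (hpos : ∀ i, 0 < n i)
    (hz : z ∈ Facts n m) : fLen z ≤ m := by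
  calc fLen z = ∑ i, z i := rfl
    _ ≤ ∑ i, z i * n i := Finset.sum_le_sum fun i _ => Nat.le_mul_of_pos_right _ (hpos i)
    _ = m := hz

lemma fDist_le_facts {n : Fin k → ℕ} {m : ℕ} {z z' : Fin k → ℕ} (hpos : ∀ i, 0 < n i)
    (hz : z ∈ Facts n m) (hz' : z' ∈ Facts n m) : fDist z z' ≤ m :=
  le_trans (Nat.sub_le _ _) (max_le (fLen_le_facts hpos hz) (fLen_le_facts hpos hz'))

end NumAux
namespace NumAux

variable {k : ℕ}

/-- An `N`-chain indexed by `ℕ`, constant equal to `z'` from time `t` on. -/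
def NChain (n : Fin k → ℕ) (m N t : ℕ) (F : ℕ → Fin k → ℕ) (z z' : Fin k → ℕ) : Prop :=
  F 0 = z ∧ (∀ j, t ≤ j → F j = z') ∧ (∀ j, F j ∈ Facts n m) ∧
    ∀ j, fDist (F j) (F (j + 1)) ≤ N

lemma connectsEq_of_nchain {n : Fin k → ℕ} {m N t : ℕ} {F : ℕ → Fin k → ℕ} {z z' : Fin k → ℕ}
    (h : NChain n m N t F z z') (hlen : ∀ j, fLen (F j) = fLen z) :
    ConnectsEq n m N z z' := by
  obtain ⟨h0, hl, hf, hd⟩ := h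
  refine ⟨t, fun i => F i.val, by simpa using h0, by simpa using hl t le_rfl,
    fun i => hf _, fun i => hlen _, fun i => ?_⟩
  simpa using hd i.val

lemma connectsMon_of_nchain {n : Fin k → ℕ} {m N t : ℕ} {F : ℕ → Fin k → ℕ} {z z' : Fin k → ℕ}
    (h : NChain n m N t F z z') (hmon : Monotone fun j => fLen (F j)) :
    ConnectsMon n m N z z' := by
  obtain ⟨h0, hl, hf, hd⟩ := h
  refine ⟨t, fun i => F i.val, by simpa using h0, by simpa using hl t le_rfl,
    fun i => hf _, Or.inl fun i j hij => hmon (show i.val ≤ j.val from hij), fun i => ?_⟩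
  simpa using hd i.val

lemma connectsMon_of_nchain_rev {n : Fin k → ℕ} {m N t : ℕ} {F : ℕ → Fin k → ℕ} {z z' : Fin k → ℕ}
    (h : NChain n m N t F z z') (hmon : Monotone fun j => fLen (F j)) :
    ConnectsMon n m N z' z := by
  obtain ⟨h0, hl, hf, hd⟩ := h
  refine ⟨t, fun i => F (t - i.val), by simpa using hl t le_rfl, by simpa using h0,
    fun i => hf _, Or.inr fun i j hij => hmon (Nat.sub_le_sub_left (show i.val ≤ j.val from hij) t),
    fun i => ?_⟩
  have hi : i.val < t := i.isLt
  have e : t - (i.castSucc).val = (t - (i.succ).val) + 1 := by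
    simp only [Fin.coe_castSucc, Fin.val_succ]
    omega
  show fDist (F (t - i.castSucc.val)) (F (t - i.succ.val)) ≤ N
  rw [e, fDist_comm]
  exact hd _

lemma nchain_single {n : Fin k → ℕ} {m N : ℕ} {z z' : Fin k → ℕ}
    (hz : z ∈ Facts n m) (hz' : z' ∈ Facts n m) (hd : fDist z z' ≤ N) :
    NChain n m N 1 (fun j => if j = 0 then z else z') z z' ∧
      (fLen z ≤ fLen z' → Monotone fun j => fLen (if j = 0 then z else z')) := by
  constructor
  · refine ⟨by simp, fun j hj => by simp [show j ≠ 0 by omega], fun j => ?_, fun j => ?_⟩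
    · by_cases h : j = 0 <;> simp [h, hz, hz']
    · rcases Nat.eq_zero_or_pos j with h | h
      · simpa [h] using hd
      · have h1 : j ≠ 0 := h.ne'
        have h2 : j + 1 ≠ 0 := by omega
        simp [h1, h2, fDist_self]
  · intro hle
    apply monotone_nat_of_le_succ
    intro j
    rcases Nat.eq_zero_or_pos j with h | h
    · simpa [h] using hle
    · simp [h.ne', show j + 1 ≠ 0 by omega]

lemma nchain_const {n : Fin k → ℕ} {m N : ℕ} {z : Fin k → ℕ} (hz : z ∈ Facts n m) :
    NChain n m N 0 (fun _ => z) z z :=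
  ⟨rfl, fun _ _ => rfl, fun _ => hz, fun _ => by simp [fDist_self]⟩

lemma nchain_append {n : Fin k → ℕ} {m N t s : ℕ} {F G : ℕ → Fin k → ℕ} {z w z' : Fin k → ℕ}
    (h1 : NChain n m N t F z w) (h2 : NChain n m N s G w z')
    (hm1 : Monotone fun j => fLen (F j)) (hm2 : Monotone fun j => fLen (G j)) :
    ∃ H, NChain n m N (t + s) H z z' ∧ Monotone fun j => fLen (H j) := by
  obtain ⟨hF0, hFt, hFm, hFd⟩ := h1
  obtain ⟨hG0, hGs, hGm, hGd⟩ := h2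
  have hFtw : F t = w := hFt t le_rfl
  refine ⟨fun j => if j < t then F j else G (j - t), ⟨?_, ?_, ?_, ?_⟩, ?_⟩
  · rcases Nat.eq_zero_or_pos t with h | h
    · have := hFt 0 (by omega)
      simp [h, hG0, ← hF0, this, hF0]
    · simp [h, hF0]
  · intro j hj
    have h1 : ¬ j < t := by omega
    have h2 : s ≤ j - t := by omega
    simp [h1, hGs _ h2]
  · intro j
    by_cases h : j < t <;> simp [h, hFm, hGm]
  · intro j
    by_cases hj : j + 1 < t
    · have h1 : j < t := by omega
      simpa [h1, hj] using hFd j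
    · by_cases hj2 : j < t
      · have he : j + 1 = t := by omega
        have : G (j + 1 - t) = F (j + 1) := by
          rw [he, Nat.sub_self, hG0, hFtw]
        simp only [hj2, hj, if_pos, if_neg, if_true, if_false]
        rw [this]
        exact hFd j
      · have h1 : ¬ j + 1 < t := hj
        have h2 : j + 1 - t = (j - t) + 1 := by omega
        simp only [hj2, h1, if_neg, if_false, h2]
        exact hGd (j - t)
  · apply monotone_nat_of_le_succ
    intro j
    by_cases hj : j + 1 < t
    · have h1 : j < t := by omega
      simpa [h1, hj] using hm1 (Nat.le_succ j)
    · by_cases hj2 : j < t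
      · have h3 : fLen (F j) ≤ fLen (F t) := hm1 (by omega)
        have h4 : G (j + 1 - t) = G 0 := by rw [show j + 1 - t = 0 by omega]
        simp only [hj2, hj, if_pos, if_neg, if_true, if_false, h4, hG0, ← hFtw]
        exact h3
      · have h2 : j + 1 - t = (j - t) + 1 := by omega
        simp only [hj2, hj, if_neg, if_false, h2]
        exact hm2 (Nat.le_succ _)

end NumAux
namespace NumAux

variable {k : ℕ}

lemma nchain_of_connectsEq {n : Fin k → ℕ} {m N : ℕ} {z z' : Fin k → ℕ}
    (h : ConnectsEq n m N z z') :
    ∃ t F, NChain n m N t F z z' ∧ ∀ j, fLen (F j) = fLen z := by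
  obtain ⟨t, f, h0, hl, hf, hlen, hd⟩ := h
  refine ⟨t, fun j => f ⟨min j t, Nat.lt_succ_of_le (min_le_right _ _)⟩, ⟨?_, ?_, ?_, ?_⟩, ?_⟩
  · have e : (⟨min 0 t, Nat.lt_succ_of_le (min_le_right _ _)⟩ : Fin (t+1)) = 0 :=
      Fin.ext (by simp)
    exact (congrArg f e).trans h0
  · intro j hj
    have e : (⟨min j t, Nat.lt_succ_of_le (min_le_right _ _)⟩ : Fin (t+1)) = Fin.last t :=
      Fin.ext (by simp [Nat.min_eq_right hj])
    exact (congrArg f e).trans hl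
  · intro j; exact hf _
  · intro j
    by_cases hj : j < t
    · have e1 : (⟨min j t, Nat.lt_succ_of_le (min_le_right _ _)⟩ : Fin (t+1)) =
          (⟨j, hj⟩ : Fin t).castSucc := Fin.ext (by simp [Fin.coe_castSucc]; omega)
      have e2 : (⟨min (j+1) t, Nat.lt_succ_of_le (min_le_right _ _)⟩ : Fin (t+1)) =
          (⟨j, hj⟩ : Fin t).succ := Fin.ext (by simp [Fin.val_succ]; omega)
      have h5 := hd (⟨j, hj⟩ : Fin t)
      rw [← e1, ← e2] at h5
      exact h5
    · have e1 : min j t = t := by omega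
      have e2 : min (j+1) t = t := by omega
      have e3 : (⟨min j t, Nat.lt_succ_of_le (min_le_right _ _)⟩ : Fin (t+1)) =
          ⟨min (j+1) t, Nat.lt_succ_of_le (min_le_right _ _)⟩ := Fin.ext (by simp [e1, e2])
      show fDist (f ⟨min j t, Nat.lt_succ_of_le (min_le_right _ _)⟩)
        (f ⟨min (j+1) t, Nat.lt_succ_of_le (min_le_right _ _)⟩) ≤ N
      rw [e3, fDist_self]
      exact Nat.zero_le _
  · intro j; exact hlen _

/-- the trivial bound `m` belongs to each defining set -/
lemma mem_monSet_m {n : Fin k → ℕ} {m : ℕ} (hpos : ∀ i, 0 < n i) :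
    ∀ z ∈ Facts n m, ∀ z' ∈ Facts n m, ConnectsMon n m m z z' := by
  intro z hz z' hz'
  rcases le_total (fLen z) (fLen z') with h | h
  · obtain ⟨hc, hmon⟩ := nchain_single hz hz' (fDist_le_facts hpos hz hz')
    exact connectsMon_of_nchain hc (hmon h)
  · obtain ⟨hc, hmon⟩ := nchain_single hz' hz (fDist_le_facts hpos hz' hz)
    exact connectsMon_of_nchain_rev hc (hmon h)

lemma mem_eqSet_m {n : Fin k → ℕ} {m : ℕ} (hpos : ∀ i, 0 < n i) :
    ∀ z ∈ Facts n m, ∀ z' ∈ Facts n m, fLen z = fLen z' → ConnectsEq n m m z z' := by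
  intro z hz z' hz' hlen
  obtain ⟨hc, _⟩ := nchain_single hz hz' (fDist_le_facts hpos hz hz')
  apply connectsEq_of_nchain hc
  intro j
  by_cases h : j = 0 <;> simp [h, hlen]

lemma mem_adjSet_m {n : Fin k → ℕ} {m : ℕ} (hpos : ∀ i, 0 < n i) :
    ∀ a b : ℕ, AdjLen n m a b →
      ∃ z ∈ Facts n m, ∃ z' ∈ Facts n m, fLen z = a ∧ fLen z' = b ∧ fDist z z' ≤ m := by
  intro a b hadj
  obtain ⟨⟨z, hz, hza⟩, ⟨z', hz', hzb⟩, _, _⟩ := hadj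
  exact ⟨z, hz, z', hz', hza, hzb, fDist_le_facts hpos hz hz'⟩

lemma catMon_mem {n : Fin k → ℕ} {m : ℕ} (hpos : ∀ i, 0 < n i) :
    ∀ z ∈ Facts n m, ∀ z' ∈ Facts n m, ConnectsMon n m (catMon n m) z z' :=
  Nat.sInf_mem (⟨m, mem_monSet_m hpos⟩ :
    Set.Nonempty {N | ∀ z ∈ Facts n m, ∀ z' ∈ Facts n m, ConnectsMon n m N z z'})

lemma catEq_mem {n : Fin k → ℕ} {m : ℕ} (hpos : ∀ i, 0 < n i) :
    ∀ z ∈ Facts n m, ∀ z' ∈ Facts n m, fLen z = fLen z' → ConnectsEq n m (catEq n m) z z' :=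
  Nat.sInf_mem (⟨m, mem_eqSet_m hpos⟩ :
    Set.Nonempty {N | ∀ z ∈ Facts n m, ∀ z' ∈ Facts n m, fLen z = fLen z' →
      ConnectsEq n m N z z'})

lemma catAdj_mem {n : Fin k → ℕ} {m : ℕ} (hpos : ∀ i, 0 < n i) :
    ∀ a b : ℕ, AdjLen n m a b →
      ∃ z ∈ Facts n m, ∃ z' ∈ Facts n m, fLen z = a ∧ fLen z' = b ∧ fDist z z' ≤ catAdj n m :=
  Nat.sInf_mem (⟨m, mem_adjSet_m hpos⟩ :
    Set.Nonempty {N | ∀ a b : ℕ, AdjLen n m a b →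
      ∃ z ∈ Facts n m, ∃ z' ∈ Facts n m, fLen z = a ∧ fLen z' = b ∧ fDist z z' ≤ N})

lemma catEq_le_catMon {n : Fin k → ℕ} {m : ℕ} (hpos : ∀ i, 0 < n i) :
    catEq n m ≤ catMon n m := by
  apply Nat.sInf_le
  intro z hz z' hz' hlen
  obtain ⟨t, f, h0, hl, hf, hmono, hd⟩ := catMon_mem hpos z hz z' hz'
  refine ⟨t, f, h0, hl, hf, ?_, hd⟩
  intro i
  have h1 : fLen (f 0) = fLen z := by rw [h0]
  have h2 : fLen (f (Fin.last t)) = fLen z := by rw [hl, ← hlen]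
  rcases hmono with h | h
  · have ha := h (Fin.zero_le i)
    have hb := h (Fin.le_last i)
    simp only at ha hb
    omega
  · have ha := h (Fin.zero_le i)
    have hb := h (Fin.le_last i)
    simp only at ha hb
    omega

lemma catAdj_le_catMon {n : Fin k → ℕ} {m : ℕ} (hpos : ∀ i, 0 < n i) :
    catAdj n m ≤ catMon n m := by
  classical
  apply Nat.sInf_le
  intro a b hadj
  obtain ⟨⟨z, hz, hza⟩, ⟨z', hz', hzb⟩, hab, hbet⟩ := hadj
  obtain ⟨t, f, h0, hl, hf, hmono, hd⟩ := catMon_mem hpos z hz z' hz'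
  have hmon : Monotone fun i => fLen (f i) := by
    rcases hmono with h | h
    · exact h
    · have := h (Fin.zero_le (Fin.last t))
      simp only at this
      rw [h0, hl, hza, hzb] at this
      omega
  have hval : ∀ i : Fin (t+1), fLen (f i) = a ∨ fLen (f i) = b := by
    intro i
    have h1 := hmon (Fin.zero_le i)
    have h2 := hmon (Fin.le_last i)
    simp only at h1 h2
    rw [h0, hza] at h1
    rw [hl, hzb] at h2
    exact hbet _ ⟨f i, hf i, rfl⟩ h1 h2
  set g : ℕ → Fin (t+1) := fun j => ⟨min j t, Nat.lt_succ_of_le (min_le_right _ _)⟩ with hg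
  have hgt : g t = Fin.last t := Fin.ext (by simp [hg])
  have hP : ∃ j, fLen (f (g j)) = b := ⟨t, by rw [hgt, hl, hzb]⟩
  set j0 := Nat.find hP with hj0def
  have hj0 : fLen (f (g j0)) = b := Nat.find_spec hP
  have hj0t : j0 ≤ t := Nat.find_min' hP (by rw [hgt, hl, hzb])
  have hj0pos : j0 ≠ 0 := by
    intro h
    have hg0 : g 0 = 0 := Fin.ext (by simp [hg])
    rw [h, hg0, h0, hza] at hj0
    omega
  obtain ⟨j1, hj1e⟩ : ∃ j1, j0 = j1 + 1 := ⟨j0 - 1, by omega⟩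
  have hj1 : ¬ fLen (f (g j1)) = b := Nat.find_min hP (by omega)
  have hj1a : fLen (f (g j1)) = a := (hval _).resolve_right hj1
  have hj1t : j1 < t := by
    rcases Nat.lt_or_ge j1 t with h | h
    · exact h
    · exfalso
      have : g j1 = Fin.last t := Fin.ext (by simp [hg]; omega)
      rw [this, hl, hzb] at hj1a
      omega
  refine ⟨f (g j1), hf _, f (g (j1+1)), hf _, hj1a, by rw [← hj1e]; exact hj0, ?_⟩
  have e1 : g j1 = (⟨j1, hj1t⟩ : Fin t).castSucc := Fin.ext (by simp [hg, Fin.coe_castSucc]; omega)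
  have e2 : g (j1+1) = (⟨j1, hj1t⟩ : Fin t).succ := Fin.ext (by simp [hg, Fin.val_succ]; omega)
  rw [e1, e2]
  exact hd _

end NumAux
namespace NumAux

variable {k : ℕ}

lemma up_chain {n : Fin k → ℕ} {m N : ℕ}
    (hEq : ∀ z ∈ Facts n m, ∀ z' ∈ Facts n m, fLen z = fLen z' → ConnectsEq n m N z z')
    (hAdj : ∀ a b : ℕ, AdjLen n m a b →
      ∃ w ∈ Facts n m, ∃ w' ∈ Facts n m, fLen w = a ∧ fLen w' = b ∧ fDist w w' ≤ N) :
    ∀ d z z', z ∈ Facts n m → z' ∈ Facts n m → fLen z ≤ fLen z' → fLen z' - fLen z ≤ d →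
      ∃ t F, NChain n m N t F z z' ∧ Monotone fun j => fLen (F j) := by
  intro d
  induction d with
  | zero =>
    intro z z' hz hz' hle hd
    have hlen : fLen z = fLen z' := by omega
    obtain ⟨t, F, hF, hFlen⟩ := nchain_of_connectsEq (hEq z hz z' hz' hlen)
    refine ⟨t, F, hF, ?_⟩
    have : (fun j => fLen (F j)) = fun _ => fLen z := funext fun j => hFlen j
    rw [this]
    exact monotone_const
  | succ d ih =>
    intro z z' hz hz' hle hd
    rcases eq_or_lt_of_le hle with heq | hlt
    · exact ih z z' hz hz' hle (by omega)
    · set b := sInf {l | l ∈ LSet n m ∧ fLen z < l} with hbdef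
      have hbne : {l | l ∈ LSet n m ∧ fLen z < l}.Nonempty := ⟨fLen z', ⟨z', hz', rfl⟩, hlt⟩
      have hbmem := Nat.sInf_mem hbne
      have hbL : b ∈ LSet n m := hbmem.1
      have hbgt : fLen z < b := hbmem.2
      have hble : b ≤ fLen z' := Nat.sInf_le ⟨⟨z', hz', rfl⟩, hlt⟩
      have hadj : AdjLen n m (fLen z) b := by
        refine ⟨⟨z, hz, rfl⟩, hbL, hbgt, ?_⟩
        intro l hl h1 h2
        rcases eq_or_lt_of_le h1 with h | h
        · exact Or.inl h.symm
        · exact Or.inr (le_antisymm h2 (Nat.sInf_le ⟨hl, h⟩))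
      obtain ⟨w, hw, w', hw', hwa, hwb, hwd⟩ := hAdj _ _ hadj
      obtain ⟨t1, F1, hF1, hF1len⟩ := nchain_of_connectsEq (hEq z hz w hw hwa.symm)
      have hF1mon : Monotone fun j => fLen (F1 j) := by
        have : (fun j => fLen (F1 j)) = fun _ => fLen z := funext fun j => hF1len j
        rw [this]; exact monotone_const
      obtain ⟨hc2, hm2⟩ := nchain_single hw hw' hwd
      have hm2' := hm2 (by omega)
      obtain ⟨t3, F3, hF3, hF3mon⟩ := ih w' z' hw' hz' (by omega) (by omega)
      obtain ⟨H1, hH1, hH1mon⟩ := nchain_append hF1 hc2 hF1mon hm2'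
      obtain ⟨H2, hH2, hH2mon⟩ := nchain_append hH1 hF3 hH1mon hF3mon
      exact ⟨_, _, hH2, hH2mon⟩

lemma catMon_le_max {n : Fin k → ℕ} {m : ℕ} (hpos : ∀ i, 0 < n i) :
    catMon n m ≤ max (catEq n m) (catAdj n m) := by
  apply Nat.sInf_le
  have hEq : ∀ z ∈ Facts n m, ∀ z' ∈ Facts n m, fLen z = fLen z' →
      ConnectsEq n m (max (catEq n m) (catAdj n m)) z z' := by
    intro z hz z' hz' hlen
    obtain ⟨t, f, h0, hl, hf, hle, hd⟩ := catEq_mem hpos z hz z' hz' hlen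
    exact ⟨t, f, h0, hl, hf, hle, fun i => le_trans (hd i) (le_max_left _ _)⟩
  have hAdj : ∀ a b : ℕ, AdjLen n m a b →
      ∃ w ∈ Facts n m, ∃ w' ∈ Facts n m, fLen w = a ∧ fLen w' = b ∧
        fDist w w' ≤ max (catEq n m) (catAdj n m) := by
    intro a b hadj
    obtain ⟨w, hw, w', hw', hwa, hwb, hwd⟩ := catAdj_mem hpos a b hadj
    exact ⟨w, hw, w', hw', hwa, hwb, le_trans hwd (le_max_right _ _)⟩
  intro z hz z' hz'
  rcases le_total (fLen z) (fLen z') with h | h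
  · obtain ⟨t, F, hF, hFmon⟩ := up_chain hEq hAdj (fLen z' - fLen z) z z' hz hz' h le_rfl
    exact connectsMon_of_nchain hF hFmon
  · obtain ⟨t, F, hF, hFmon⟩ := up_chain hEq hAdj (fLen z - fLen z') z' z hz' hz h le_rfl
    exact connectsMon_of_nchain_rev hF hFmon

lemma catMon_eq_max {n : Fin k → ℕ} {m : ℕ} (hpos : ∀ i, 0 < n i) :
    catMon n m = max (catEq n m) (catAdj n m) :=
  le_antisymm (catMon_le_max hpos) (max_le (catEq_le_catMon hpos) (catAdj_le_catMon hpos))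

end NumAux
namespace NumAux

variable {k : ℕ}

/-- pairs of factorizations -/
abbrev VP (k : ℕ) := (Fin k → ℕ) × (Fin k → ℕ)

def MinIn (S : Set (VP k)) (p : VP k) : Prop := p ∈ S ∧ ∀ q ∈ S, q ≤ p → q = p

lemma minIn_finite (S : Set (VP k)) : {p | MinIn S p}.Finite := by
  have h1 : (Set.univ : Set (Fin k → ℕ)).IsPWO :=
    Set.isPWO_of_wellQuasiOrderedLE Set.univ
  have hpwo : (Set.univ : Set (VP k)).IsPWO := by
    have := h1.prod h1
    rwa [Set.univ_prod_univ] at this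
  have hanti : IsAntichain (· ≤ ·) {p | MinIn S p} := by
    intro a ha b hb hne hle
    exact hne (hb.2 a ha.1 hle)
  exact hanti.finite_of_partiallyWellOrderedOn (hpwo.mono (Set.subset_univ _))

def ptot (p : VP k) : ℕ := fLen p.1 + fLen p.2

lemma eq_of_le_of_fLen_eq {x y : Fin k → ℕ} (h : x ≤ y) (hl : fLen x = fLen y) : x = y := by
  by_contra hne
  have hex : ∃ i, x i < y i := by
    by_contra hno
    push_neg at hno
    exact hne (funext fun i => le_antisymm (h i) (hno i))
  obtain ⟨i, hi⟩ := hex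
  have : fLen x < fLen y :=
    Finset.sum_lt_sum (fun j _ => h j) ⟨i, Finset.mem_univ i, hi⟩
  omega

lemma exists_minIn_le {S : Set (VP k)} {p : VP k} (hp : p ∈ S) :
    ∃ q, MinIn S q ∧ q ≤ p := by
  have hW : {N | ∃ q, (q ∈ S ∧ q ≤ p) ∧ ptot q = N}.Nonempty := ⟨ptot p, p, ⟨hp, le_rfl⟩, rfl⟩
  obtain ⟨q, ⟨hqS, hqp⟩, hqt⟩ := Nat.sInf_mem hW
  refine ⟨q, ⟨hqS, fun r hr hrq => ?_⟩, hqp⟩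
  have hrp : r ≤ p := le_trans hrq hqp
  have h1 : sInf {N | ∃ q, (q ∈ S ∧ q ≤ p) ∧ ptot q = N} ≤ ptot r :=
    Nat.sInf_le ⟨r, ⟨hr, hrp⟩, rfl⟩
  have h2a : fLen r.1 ≤ fLen q.1 := fLen_mono hrq.1
  have h2b : fLen r.2 ≤ fLen q.2 := fLen_mono hrq.2
  have e1 : fLen r.1 = fLen q.1 ∧ fLen r.2 = fLen q.2 := by
    unfold ptot at hqt h1
    omega
  exact Prod.ext (eq_of_le_of_fLen_eq hrq.1 e1.1) (eq_of_le_of_fLen_eq hrq.2 e1.2)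

/-! ### the equal-length relation monoid -/

def Keq (n : Fin k → ℕ) : Set (VP k) :=
  {p | fVal n p.1 = fVal n p.2 ∧ fLen p.1 = fLen p.2}

def KeqA (n : Fin k → ℕ) : Set (VP k) := {p | MinIn (Keq n \ {0}) p}

noncomputable def B1 (n : Fin k → ℕ) : ℕ := sSup ((fun p => fLen p.1) '' KeqA n)

lemma b1_bound {n : Fin k → ℕ} {p : VP k} (hp : p ∈ KeqA n) : fLen p.1 ≤ B1 n :=
  le_csSup ((minIn_finite _).image _).bddAbove ⟨p, hp, rfl⟩

lemma ptot_pos {n : Fin k → ℕ} {q : VP k} (hq : q ∈ Keq n) (hq0 : q ≠ 0) : 1 ≤ ptot q := by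
  rcases Nat.eq_zero_or_pos (ptot q) with h | h
  · exfalso
    unfold ptot at h
    have h1 : q.1 = 0 := fLen_eq_zero (by omega)
    have h2 : q.2 = 0 := fLen_eq_zero (by omega)
    exact hq0 (Prod.ext h1 h2)
  · exact h

lemma keq_decomp (n : Fin k → ℕ) :
    ∀ (c : ℕ) (p : VP k), p ∈ Keq n → ptot p ≤ c →
      ∃ l : List (VP k), (∀ q ∈ l, q ∈ KeqA n) ∧ l.sum = p := by
  intro c
  induction c with
  | zero =>
    intro p hp hc
    have h1 : p.1 = 0 := fLen_eq_zero (by unfold ptot at hc; omega)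
    have h2 : p.2 = 0 := fLen_eq_zero (by unfold ptot at hc; omega)
    have hp0 : p = 0 := Prod.ext h1 h2
    exact ⟨[], by simp, by rw [List.sum_nil, hp0]⟩
  | succ c ih =>
    intro p hp hc
    by_cases hp0 : p = 0
    · exact ⟨[], by simp, by rw [List.sum_nil, hp0]⟩
    · obtain ⟨q, hqmin, hqle⟩ := exists_minIn_le (S := Keq n \ {0}) ⟨hp, hp0⟩
      have hqK : q ∈ Keq n := hqmin.1.1
      have hq0 : q ≠ 0 := hqmin.1.2
      set r : VP k := (p.1 - q.1, p.2 - q.2) with hrdef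
      have hr1 : fVal n r.1 + fVal n q.1 = fVal n p.1 := fVal_sub_add hqle.1
      have hr2 : fVal n r.2 + fVal n q.2 = fVal n p.2 := fVal_sub_add hqle.2
      have hl1 : fLen r.1 + fLen q.1 = fLen p.1 := fLen_sub_add hqle.1
      have hl2 : fLen r.2 + fLen q.2 = fLen p.2 := fLen_sub_add hqle.2
      have hrK : r ∈ Keq n := by
        constructor
        · have := hp.1; have := hqK.1; omega
        · have := hp.2; have := hqK.2; omega
      have hrc : ptot r ≤ c := by
        have := ptot_pos hqK hq0
        unfold ptot at *
        omega
      obtain ⟨l, hl, hsum⟩ := ih r hrK hrc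
      refine ⟨q :: l, ?_, ?_⟩
      · intro x hx
        rcases List.mem_cons.mp hx with h | h
        · exact h ▸ hqmin
        · exact hl x h
      · rw [List.sum_cons, hsum]
        have e1 : q.1 + (p.1 - q.1) = p.1 := by
          funext i
          have : q.1 i ≤ p.1 i := hqle.1 i
          simp only [Pi.add_apply, Pi.sub_apply]
          omega
        have e2 : q.2 + (p.2 - q.2) = p.2 := by
          funext i
          have : q.2 i ≤ p.2 i := hqle.2 i
          simp only [Pi.add_apply, Pi.sub_apply]
          omega
        exact Prod.ext e1 e2

lemma keq_chain (n : Fin k → ℕ) :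
    ∀ (l : List (VP k)) (z : Fin k → ℕ) (m : ℕ), z ∈ Facts n m →
      (∀ q ∈ l, q ∈ KeqA n) → l.sum.1 ≤ z →
      ∃ t F, NChain n m (B1 n) t F z (z - l.sum.1 + l.sum.2) ∧
        ∀ j, fLen (F j) = fLen z := by
  intro l
  induction l with
  | nil =>
    intro z m hz _ _
    have he : z - ([] : List (VP k)).sum.1 + ([] : List (VP k)).sum.2 = z := by
      simp
    rw [he]
    exact ⟨0, fun _ => z, nchain_const hz, fun _ => rfl⟩
  | cons q l ih =>
    intro z m hz hql hle
    have hq : q ∈ KeqA n := hql q List.mem_cons_self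
    have hqK : q ∈ Keq n := hq.1.1
    have hlec : ∀ i, q.1 i + l.sum.1 i ≤ z i := by
      intro i
      have h := hle i
      simpa [List.sum_cons, Prod.fst_add, Pi.add_apply] using h
    have hq1z : q.1 ≤ z := by
      intro i
      exact le_trans (Nat.le_add_right _ _) (hlec i)
    set w := z - q.1 + q.2 with hwdef
    have hwf : w ∈ Facts n m := swap_facts hz hq1z hqK.1
    have hwlen : fLen w = fLen z := by
      rw [fLen_swap hq1z]
      have h1 := fLen_mono hq1z
      have h2 := hqK.2
      omega
    have hd : fDist z w ≤ B1 n := by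
      refine le_trans (fDist_swap_le hq1z) ?_
      rw [← hqK.2, max_self]
      exact b1_bound hq
    have hle' : l.sum.1 ≤ w := by
      intro i
      have h8 : q.1 i + l.sum.1 i ≤ z i := hlec i
      show l.sum.1 i ≤ (z - q.1 + q.2) i
      simp only [Pi.add_apply, Pi.sub_apply]
      omega
    obtain ⟨t, F, hF, hFlen⟩ := ih w m hwf (fun x hx => hql x (List.mem_cons_of_mem _ hx)) hle'
    obtain ⟨hF0, hFt, hFm, hFd⟩ := hF
    have hend : w - l.sum.1 + l.sum.2 = z - (q :: l).sum.1 + (q :: l).sum.2 := by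
      funext i
      have h1 := hlec i
      simp only [hwdef, List.sum_cons, Prod.fst_add, Prod.snd_add, Pi.add_apply, Pi.sub_apply]
      omega
    refine ⟨t + 1, fun j => if j = 0 then z else F (j - 1), ⟨by simp, ?_, ?_, ?_⟩, ?_⟩
    · intro j hj
      have hj0 : j ≠ 0 := by omega
      have h7 : t ≤ j - 1 := by omega
      show (if j = 0 then z else F (j - 1)) = z - (q :: l).sum.1 + (q :: l).sum.2
      rw [if_neg hj0, hFt _ h7, hend]
    · intro j
      by_cases h : j = 0 <;> simp [h, hz, hFm]
    · intro j
      rcases Nat.eq_zero_or_pos j with h | h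
      · subst h
        simpa [hF0] using hd
      · have hj0 : j ≠ 0 := by omega
        have hj1 : j + 1 ≠ 0 := by omega
        have e1 : j + 1 - 1 = (j - 1) + 1 := by omega
        show fDist (if j = 0 then z else F (j - 1)) (if j + 1 = 0 then z else F (j + 1 - 1)) ≤ B1 n
        rw [if_neg hj0, if_neg hj1, e1]
        exact hFd (j - 1)
    · intro j
      show fLen (if j = 0 then z else F (j - 1)) = fLen z
      by_cases h : j = 0
      · simp [h]
      · rw [if_neg h, hFlen, hwlen]

lemma catEq_le_B1 (n : Fin k → ℕ) (m : ℕ) :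
    ∀ z ∈ Facts n m, ∀ z' ∈ Facts n m, fLen z = fLen z' → ConnectsEq n m (B1 n) z z' := by
  intro z hz z' hz' hlen
  have hpK : (z, z') ∈ Keq n := ⟨hz.trans hz'.symm, hlen⟩
  obtain ⟨l, hl, hsum⟩ := keq_decomp n (ptot (z, z')) (z, z') hpK le_rfl
  have h1 : l.sum.1 = z := by rw [hsum]
  have h2 : l.sum.2 = z' := by rw [hsum]
  have hle : l.sum.1 ≤ z := h1.le
  obtain ⟨t, F, hF, hFlen⟩ := keq_chain n l z m hz hl hle
  have he : z - l.sum.1 + l.sum.2 = z' := by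
    rw [h1, h2]
    funext i
    simp only [Pi.add_apply, Pi.sub_apply]
    omega
  rw [he] at hF
  exact connectsEq_of_nchain hF hFlen

end NumAux
namespace NumAux

variable {k : ℕ}

/-! ### the adjacent catenary degree bound -/

def Kv (n : Fin k → ℕ) : Set (VP k) := {p | fVal n p.1 = fVal n p.2}

def T1 (n : Fin k → ℕ) : Set (VP k) := {p | p ∈ Kv n ∧ fLen p.1 < fLen p.2}

noncomputable def C1 (n : Fin k → ℕ) : ℕ := sSup ((fun p => fLen p.2) '' {p | MinIn (T1 n) p})

def Td (n : Fin k → ℕ) (d : ℕ) : Set (VP k) := {p | p ∈ Kv n ∧ fLen p.2 = fLen p.1 + d}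

noncomputable def C2 (n : Fin k → ℕ) : ℕ :=
  sSup ((fun p => fLen p.2) '' ⋃ d ∈ Finset.Icc 1 (C1 n), {p | MinIn (Td n d) p})

lemma gap_le {n : Fin k → ℕ} {m a b : ℕ} (hadj : AdjLen n m a b) : b ≤ a + C1 n := by
  obtain ⟨⟨z, hz, hza⟩, ⟨z', hz', hzb⟩, hab, hbet⟩ := hadj
  have hT : (z, z') ∈ T1 n := ⟨hz.trans hz'.symm, by rw [hza, hzb]; exact hab⟩
  obtain ⟨r, hrmin, hrle⟩ := exists_minIn_le hT
  have hr := hrmin.1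
  have hr1z : r.1 ≤ z := hrle.1
  set w := z - r.1 + r.2 with hwdef
  have hwF : w ∈ Facts n m := swap_facts hz hr1z hr.1
  have hwlen : fLen w = a - fLen r.1 + fLen r.2 := by rw [fLen_swap hr1z, hza]
  have h1 : fLen r.1 ≤ a := by rw [← hza]; exact fLen_mono hr1z
  have h2 : fLen r.1 < fLen r.2 := hr.2
  have haw : a < fLen w := by omega
  have hwL : fLen w ∈ LSet n m := ⟨w, hwF, rfl⟩
  have hC : fLen r.2 ≤ C1 n :=
    le_csSup (((minIn_finite (T1 n)).image _).bddAbove) ⟨r, hrmin, rfl⟩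
  rcases le_or_gt (fLen w) b with h | h
  · rcases hbet _ hwL (le_of_lt haw) h with h3 | h3
    · omega
    · omega
  · omega

lemma catAdj_bound (n : Fin k → ℕ) (m : ℕ) :
    ∀ a b : ℕ, AdjLen n m a b →
      ∃ z ∈ Facts n m, ∃ z' ∈ Facts n m, fLen z = a ∧ fLen z' = b ∧ fDist z z' ≤ C2 n := by
  intro a b hadj
  have hgap : b ≤ a + C1 n := gap_le hadj
  obtain ⟨⟨z, hz, hza⟩, ⟨z', hz', hzb⟩, hab, hbet⟩ := hadj
  have hd1 : 1 ≤ b - a := by omega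
  have hd2 : b - a ≤ C1 n := by omega
  have hT : (z, z') ∈ Td n (b - a) := by
    refine ⟨hz.trans hz'.symm, ?_⟩
    rw [hza, hzb]
    omega
  obtain ⟨r, hrmin, hrle⟩ := exists_minIn_le hT
  have hr := hrmin.1
  have hr1z : r.1 ≤ z := hrle.1
  set w := z - r.1 + r.2 with hwdef
  have hwF : w ∈ Facts n m := swap_facts hz hr1z hr.1
  have h1 : fLen r.1 ≤ a := by rw [← hza]; exact fLen_mono hr1z
  have h2 : fLen r.2 = fLen r.1 + (b - a) := hr.2
  have hwlen : fLen w = b := by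
    rw [fLen_swap hr1z, hza]
    omega
  have hrC : fLen r.2 ≤ C2 n := by
    apply le_csSup
    · apply Set.Finite.bddAbove
      apply Set.Finite.image
      apply Set.Finite.biUnion (Finset.Icc 1 (C1 n)).finite_toSet
      intro d _
      exact minIn_finite (Td n d)
    · exact ⟨r, Set.mem_biUnion (Finset.mem_Icc.mpr ⟨hd1, hd2⟩) hrmin, rfl⟩
  have hdist : fDist z w ≤ C2 n := by
    refine le_trans (fDist_swap_le hr1z) ?_
    rw [max_eq_right (by omega : fLen r.1 ≤ fLen r.2)]
    exact hrC
  exact ⟨z, hz, w, hwF, hza, hwlen, hdist⟩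

lemma catAdj_le_C2 (n : Fin k → ℕ) (m : ℕ) : catAdj n m ≤ C2 n :=
  Nat.sInf_le (catAdj_bound n m)

lemma catEq_le_B1' (n : Fin k → ℕ) (m : ℕ) : catEq n m ≤ B1 n :=
  Nat.sInf_le (catEq_le_B1 n m)

end NumAux
/-- For every element `m` of a numerical monoid,
`c_mon(m) = max{c_eq(m), c_adj(m)}`; consequently
`c_mon(M) = max{c_eq(M), c_adj(M)}`. -/
theorem monotone_eq_max_equivalent_adjacent {k : ℕ} (n : Fin k → ℕ)
    (hpos : ∀ i, 0 < n i) (hgcd : Finset.univ.gcd n = 1) :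
    (∀ m : ℕ, (Facts n m).Nonempty →
      catMon n m = max (catEq n m) (catAdj n m)) ∧
    catMonM n = max (catEqM n) (catAdjM n) := by
  refine ⟨fun m _ => NumAux.catMon_eq_max hpos, ?_⟩
  have hSne : {m | (Facts n m).Nonempty}.Nonempty := ⟨0, 0, by simp [Facts]⟩
  have hbEq : ∀ x ∈ catEq n '' {m | (Facts n m).Nonempty}, x ≤ NumAux.B1 n := by
    rintro x ⟨m, _, rfl⟩
    exact NumAux.catEq_le_B1' n m
  have hbAdj : ∀ x ∈ catAdj n '' {m | (Facts n m).Nonempty}, x ≤ NumAux.C2 n := by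
    rintro x ⟨m, _, rfl⟩
    exact NumAux.catAdj_le_C2 n m
  have hbMon : ∀ x ∈ catMon n '' {m | (Facts n m).Nonempty},
      x ≤ max (NumAux.B1 n) (NumAux.C2 n) := by
    rintro x ⟨m, _, rfl⟩
    rw [NumAux.catMon_eq_max hpos]
    exact max_le_max (NumAux.catEq_le_B1' n m) (NumAux.catAdj_le_C2 n m)
  have bddEq : BddAbove (catEq n '' {m | (Facts n m).Nonempty}) := ⟨_, hbEq⟩
  have bddAdj : BddAbove (catAdj n '' {m | (Facts n m).Nonempty}) := ⟨_, hbAdj⟩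
  have bddMon : BddAbove (catMon n '' {m | (Facts n m).Nonempty}) := ⟨_, hbMon⟩
  apply le_antisymm
  · obtain ⟨m0, hm0, hm0e⟩ := Nat.sSup_mem (hSne.image (catMon n)) bddMon
    calc catMonM n = catMon n m0 := hm0e.symm
      _ = max (catEq n m0) (catAdj n m0) := NumAux.catMon_eq_max hpos
      _ ≤ max (catEqM n) (catAdjM n) :=
        max_le_max (le_csSup bddEq ⟨m0, hm0, rfl⟩) (le_csSup bddAdj ⟨m0, hm0, rfl⟩)
  · apply max_le
    · obtain ⟨m1, hm1, hm1e⟩ := Nat.sSup_mem (hSne.image (catEq n)) bddEq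
      calc catEqM n = catEq n m1 := hm1e.symm
        _ ≤ catMon n m1 := NumAux.catEq_le_catMon hpos
        _ ≤ catMonM n := le_csSup bddMon ⟨m1, hm1, rfl⟩
    · obtain ⟨m2, hm2, hm2e⟩ := Nat.sSup_mem (hSne.image (catAdj n)) bddAdj
      calc catAdjM n = catAdj n m2 := hm2e.symm
        _ ≤ catMon n m2 := NumAux.catAdj_le_catMon hpos
        _ ≤ catMonM n := le_csSup bddMon ⟨m2, hm2, rfl⟩
end

section
/- Let M = ⟨a, a+d, …, a+kd⟩ be an arithmetic numerical monoid and m ∈ M. Then any two factorizations of m having equal length are joined by a 2-chain all of whose terms are factorizations of that same length; hence c_eq(m) ≤ 2, and c_eq(m) = 2 whenever m has two distinct factorizations of equal length. -/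
/-- The generators `a, a+d, …, a+kd` of an arithmetic numerical monoid. -/
def aGens (a d k : ℕ) : Fin (k + 1) → ℕ := fun i => a + (i : ℕ) * d


namespace ArithTwo

def sOne {k : ℕ} (z : Fin k → ℕ) : ℕ := ∑ i : Fin k, (i : ℕ) * z i
def sTwo {k : ℕ} (z : Fin k → ℕ) : ℕ := ∑ i : Fin k, (i : ℕ) * (i : ℕ) * z i

def Rel {k : ℕ} (z w : Fin k → ℕ) : Prop :=
  fLen w = fLen z ∧ sOne w = sOne z ∧ fDist z w ≤ 2

def Good {k : ℕ} (z : Fin k → ℕ) : Prop :=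
  ∀ i j : Fin k, (i : ℕ) + 2 ≤ (j : ℕ) → z i = 0 ∨ z j = 0

lemma fDist_comm {k : ℕ} (z w : Fin k → ℕ) : fDist z w = fDist w z := by
  unfold fDist
  rw [max_comm]
  congr 1
  exact Finset.sum_congr rfl fun i _ => min_comm _ _

lemma rel_symm {k : ℕ} : Symmetric (Rel (k := k)) := by
  rintro x y ⟨h0, h1, h2⟩
  exact ⟨h0.symm, h1.symm, by rwa [fDist_comm]⟩

lemma step_lemma {k : ℕ} (z : Fin (k+1) → ℕ) (i j : Fin (k+1))
    (hij : (i : ℕ) + 2 ≤ (j : ℕ)) (hzi : 1 ≤ z i) (hzj : 1 ≤ z j) :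
    ∃ w : Fin (k+1) → ℕ, Rel z w ∧ sTwo w < sTwo z := by
  have hjk : (j : ℕ) ≤ k := Nat.lt_succ_iff.mp j.isLt
  set i1 : Fin (k+1) := ⟨(i : ℕ) + 1, by omega⟩ with hi1
  set j1 : Fin (k+1) := ⟨(j : ℕ) - 1, by omega⟩ with hj1
  have e1 : (i1 : ℕ) = (i : ℕ) + 1 := rfl
  have e2 : (j1 : ℕ) = (j : ℕ) - 1 := rfl
  have d1 : i ≠ j := by simp only [Fin.ne_iff_vne]; omega
  have d2 : i ≠ i1 := by simp only [Fin.ne_iff_vne, e1]; omega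
  have d3 : i ≠ j1 := by simp only [Fin.ne_iff_vne, e2]; omega
  have d4 : j ≠ i1 := by simp only [Fin.ne_iff_vne, e1]; omega
  have d5 : j ≠ j1 := by simp only [Fin.ne_iff_vne, e2]; omega
  set w : Fin (k+1) → ℕ := fun t =>
    (if t = i1 then 1 else 0) + (if t = j1 then 1 else 0) +
      (z t - (if t = i then 1 else 0) - (if t = j then 1 else 0)) with hw
  have key : ∀ t, w t + ((if t = i then 1 else 0) + (if t = j then 1 else 0))
      = z t + ((if t = i1 then 1 else 0) + (if t = j1 then 1 else 0)) := by
    intro t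
    rcases eq_or_ne t i with rfl | hti
    · simp [hw, d1, d2, d3]
      omega
    · rcases eq_or_ne t j with rfl | htj
      · simp [hw, d4, d5, Ne.symm d1]
        omega
      · simp only [hw, if_neg hti, if_neg htj, Nat.sub_zero]
        ring
  have hsum : ∀ c : Fin (k+1) → ℕ,
      (∑ t, c t * w t) + (c i + c j) = (∑ t, c t * z t) + (c i1 + c j1) := by
    intro c
    have h := Finset.sum_congr rfl (fun t (_ : t ∈ Finset.univ) =>
      congrArg (fun x => c t * x) (key t))
    simp only [mul_add, Finset.sum_add_distrib, mul_ite, mul_one, mul_zero,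
      Finset.sum_ite_eq', Finset.mem_univ, if_true] at h
    omega
  have h0 : fLen w = fLen z := by
    have h := hsum (fun _ => 1)
    simp only [one_mul] at h
    have e3 : Finset.univ.sum w = fLen w := rfl
    have e4 : Finset.univ.sum z = fLen z := rfl
    simp only [fLen] at e3 e4 ⊢
    omega
  have h1 : sOne w = sOne z := by
    have h := hsum (fun t => (t : ℕ))
    simp only [sOne, e1, e2] at h ⊢
    omega
  have h2 : sTwo w < sTwo z := by
    have h := hsum (fun t => (t : ℕ) * (t : ℕ))
    simp only [e1, e2] at h
    obtain ⟨jw, hjw⟩ : ∃ jw, (j : ℕ) = (i : ℕ) + 2 + jw := ⟨(j : ℕ) - (i : ℕ) - 2, by omega⟩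
    rw [hjw] at h
    have h' : ((i:ℕ) + 2 + jw) - 1 = (i : ℕ) + 1 + jw := by omega
    rw [h'] at h
    simp only [sTwo] at h ⊢
    nlinarith [h]
  have hwi : w i = z i - 1 := by
    simp [hw, d1, d2, d3]
  have hwj : w j = z j - 1 := by
    simp [hw, d4, d5, Ne.symm d1]
  have key2 : ∀ t, min (z t) (w t) + ((if t = i then 1 else 0) + (if t = j then 1 else 0))
      = z t := by
    intro t
    rcases eq_or_ne t i with rfl | hti
    · rw [hwi, if_pos (rfl : t = t), if_neg d1]
      omega
    · rcases eq_or_ne t j with rfl | htj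
      · rw [hwj, if_neg (Ne.symm d1), if_pos (rfl : t = t)]
        omega
      · have hle : z t ≤ w t := by
          simp only [hw, if_neg hti, if_neg htj, Nat.sub_zero]
          exact Nat.le_add_left _ _
        rw [if_neg hti, if_neg htj, min_eq_left hle]
        omega
  have hmin : (∑ t, min (z t) (w t)) + 2 = fLen z := by
    have h := Finset.sum_congr rfl (fun t (_ : t ∈ Finset.univ) => key2 t)
    simp only [Finset.sum_add_distrib, Finset.sum_ite_eq', Finset.mem_univ, if_true] at h
    have e4 : Finset.univ.sum z = fLen z := rfl
    have e5 : (∑ t : Fin (k+1), z t) = fLen z := rfl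
    omega
  have hdist : fDist z w ≤ 2 := by
    unfold fDist
    rw [h0, max_self]
    omega
  exact ⟨w, ⟨h0, h1, hdist⟩, h2⟩


lemma descent {k : ℕ} (n : ℕ) : ∀ z : Fin (k+1) → ℕ, sTwo z ≤ n →
    ∃ c, Relation.ReflTransGen Rel z c ∧ Good c := by
  induction n using Nat.strong_induction_on with
  | _ n ih =>
    intro z hz
    by_cases h : ∃ i j : Fin (k+1), (i : ℕ) + 2 ≤ (j : ℕ) ∧ 1 ≤ z i ∧ 1 ≤ z j
    · obtain ⟨i, j, hij, hzi, hzj⟩ := h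
      obtain ⟨w, hrel, hlt⟩ := step_lemma z i j hij hzi hzj
      obtain ⟨c, hreach, hc⟩ := ih (sTwo w) (lt_of_lt_of_le hlt hz) w le_rfl
      exact ⟨c, Relation.ReflTransGen.head hrel hreach, hc⟩
    · push_neg at h
      refine ⟨z, Relation.ReflTransGen.refl, fun i j hij => ?_⟩
      by_cases hzi : 1 ≤ z i
      · have := h i j hij hzi
        omega
      · omega

lemma reach_sums {k : ℕ} {z c : Fin k → ℕ} (h : Relation.ReflTransGen Rel z c) :
    fLen c = fLen z ∧ sOne c = sOne z := by
  induction h with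
  | refl => exact ⟨rfl, rfl⟩
  | tail _ hrel ih => exact ⟨hrel.1.trans ih.1, hrel.2.1.trans ih.2⟩

lemma good_aux {k : ℕ} (c c' : Fin (k+1) → ℕ) (hc : Good c)
    (h0 : fLen c = fLen c') (h1 : sOne c = sOne c') (i : Fin (k+1))
    (hmin : ∀ t : Fin (k+1), (t : ℕ) < (i : ℕ) → c t = c' t) (hlt : c' i < c i) : False := by
  have hE0 : (∑ t : Fin (k+1), ((c t : ℤ) - (c' t : ℤ))) = 0 := by
    rw [Finset.sum_sub_distrib]
    have e1 : (∑ t : Fin (k+1), (c t : ℤ)) = (fLen c : ℤ) := by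
      rw [fLen]; push_cast; rfl
    have e2 : (∑ t : Fin (k+1), (c' t : ℤ)) = (fLen c' : ℤ) := by
      rw [fLen]; push_cast; rfl
    rw [e1, e2, h0, sub_self]
  have hE1 : (∑ t : Fin (k+1), ((t : ℕ) : ℤ) * ((c t : ℤ) - (c' t : ℤ))) = 0 := by
    have e1 : (∑ t : Fin (k+1), ((t : ℕ) : ℤ) * (c t : ℤ)) = (sOne c : ℤ) := by
      rw [sOne]; push_cast; rfl
    have e2 : (∑ t : Fin (k+1), ((t : ℕ) : ℤ) * (c' t : ℤ)) = (sOne c' : ℤ) := by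
      rw [sOne]; push_cast; rfl
    calc (∑ t : Fin (k+1), ((t : ℕ) : ℤ) * ((c t : ℤ) - (c' t : ℤ)))
        = (∑ t : Fin (k+1), ((t : ℕ) : ℤ) * (c t : ℤ))
          - (∑ t : Fin (k+1), ((t : ℕ) : ℤ) * (c' t : ℤ)) := by
          rw [← Finset.sum_sub_distrib]
          exact Finset.sum_congr rfl fun t _ => by ring
      _ = 0 := by rw [e1, e2, h1, sub_self]
  set Q : ℤ := ∑ t : Fin (k+1), (((t : ℕ) : ℤ) - ((i : ℕ) : ℤ) - 1) * ((c t : ℤ) - (c' t : ℤ))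
    with hQ
  have hQ0 : Q = 0 := by
    have : Q = (∑ t : Fin (k+1), ((t : ℕ) : ℤ) * ((c t : ℤ) - (c' t : ℤ)))
        - (((i : ℕ) : ℤ) + 1) * (∑ t : Fin (k+1), ((c t : ℤ) - (c' t : ℤ))) := by
      rw [hQ, Finset.mul_sum, ← Finset.sum_sub_distrib]
      exact Finset.sum_congr rfl fun t _ => by ring
    rw [this, hE0, hE1, mul_zero, sub_zero]
  have hQneg : Q ≤ -1 := by
    rw [hQ]
    calc (∑ t : Fin (k+1), (((t : ℕ) : ℤ) - ((i : ℕ) : ℤ) - 1) * ((c t : ℤ) - (c' t : ℤ)))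
        ≤ ∑ t : Fin (k+1), (if t = i then (-1 : ℤ) else 0) := by
          apply Finset.sum_le_sum
          intro t _
          rcases eq_or_ne t i with rfl | hti
          · rw [if_pos rfl]
            have h1 : ((t : ℕ) : ℤ) - ((t : ℕ) : ℤ) - 1 = -1 := by ring
            rw [h1]
            have : (1 : ℤ) ≤ (c t : ℤ) - (c' t : ℤ) := by
              have := hlt; omega
            nlinarith
          · rw [if_neg hti]
            have hvne : (t : ℕ) ≠ (i : ℕ) := fun hh => hti (Fin.ext hh)
            rcases lt_or_gt_of_ne hvne with hv | hv
            · have : c t = c' t := hmin t hv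
              rw [this]
              simp
            · rcases Nat.lt_or_ge (t : ℕ) ((i : ℕ) + 2) with hv2 | hv2
              · have : ((t : ℕ) : ℤ) - ((i : ℕ) : ℤ) - 1 = 0 := by omega
                rw [this, zero_mul]
              · have hct : c t = 0 := by
                  rcases hc i t (by omega) with h | h
                  · omega
                  · exact h
                apply mul_nonpos_of_nonneg_of_nonpos
                · omega
                · rw [hct]; simp
      _ = -1 := by
          rw [Finset.sum_ite_eq' Finset.univ i (fun _ => (-1 : ℤ))]
          simp
  omega

lemma good_unique {k : ℕ} (c c' : Fin (k+1) → ℕ) (hc : Good c) (hc' : Good c')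
    (h0 : fLen c = fLen c') (h1 : sOne c = sOne c') : c = c' := by
  by_contra hne
  have hD : (Finset.univ.filter (fun t : Fin (k+1) => c t ≠ c' t)).Nonempty := by
    by_contra hD
    apply hne
    funext t
    by_contra hct
    exact hD ⟨t, Finset.mem_filter.mpr ⟨Finset.mem_univ t, hct⟩⟩
  set i := (Finset.univ.filter (fun t : Fin (k+1) => c t ≠ c' t)).min' hD with hi
  have hiD : c i ≠ c' i := (Finset.mem_filter.mp ((Finset.univ.filter _).min'_mem hD)).2
  have hmin : ∀ t : Fin (k+1), (t : ℕ) < (i : ℕ) → c t = c' t := by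
    intro t ht
    by_contra hct
    have : i ≤ t := Finset.min'_le _ t (Finset.mem_filter.mpr ⟨Finset.mem_univ t, hct⟩)
    exact absurd (lt_of_le_of_lt this (by exact Fin.lt_def.mpr ht)) (lt_irrefl i)
  rcases Nat.lt_or_ge (c' i) (c i) with hlt | hge
  · exact good_aux c c' hc h0 h1 i hmin hlt
  · exact good_aux c' c hc' h0.symm h1.symm i (fun t ht => (hmin t ht).symm) (by omega)

lemma class_connect {k : ℕ} (z z' : Fin (k+1) → ℕ)
    (h0 : fLen z' = fLen z) (h1 : sOne z' = sOne z) :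
    Relation.ReflTransGen Rel z z' := by
  obtain ⟨c, hr, hg⟩ := descent (sTwo z) z le_rfl
  obtain ⟨c', hr', hg'⟩ := descent (sTwo z') z' le_rfl
  have hs := reach_sums hr
  have hs' := reach_sums hr'
  have : c' = c := good_unique c' c hg' hg (by omega) (by omega)
  rw [this] at hr'
  exact hr.trans ((@Relation.ReflTransGen.symmetric _ Rel ⟨rel_symm⟩).symm _ _ hr')


lemma extract_chain {k : ℕ} (z z' : Fin (k+1) → ℕ) (h : Relation.ReflTransGen Rel z z') :
    ∃ t : ℕ, ∃ f : Fin (t + 1) → Fin (k+1) → ℕ,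
      f 0 = z ∧ f (Fin.last t) = z' ∧
      (∀ i, Relation.ReflTransGen Rel z (f i)) ∧
      ∀ i : Fin t, fDist (f i.castSucc) (f i.succ) ≤ 2 := by
  induction h with
  | refl =>
    refine ⟨0, fun _ => z, rfl, rfl, fun _ => Relation.ReflTransGen.refl, fun i => i.elim0⟩
  | @tail b c hzb hbc ih =>
    obtain ⟨t, f, hf0, hfl, hfm, hfd⟩ := ih
    refine ⟨t + 1, Fin.snoc f c, ?_, ?_, ?_, ?_⟩
    · rw [show (0 : Fin (t+2)) = Fin.castSucc 0 from rfl, Fin.snoc_castSucc]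
      exact hf0
    · rw [Fin.snoc_last]
    · intro i
      refine Fin.lastCases ?_ ?_ i
      · rw [Fin.snoc_last]
        exact hzb.tail hbc
      · intro j
        rw [Fin.snoc_castSucc]
        exact hfm j
    · intro i
      refine Fin.lastCases ?_ ?_ i
      · rw [Fin.succ_last, Fin.snoc_last, Fin.snoc_castSucc, hfl]
        exact hbc.2.2
      · intro j
        rw [Fin.succ_castSucc, Fin.snoc_castSucc, Fin.snoc_castSucc]
        exact hfd j


lemma delta_of_sum_one {k : ℕ} (u : Fin k → ℕ) (h : (∑ t, u t) = 1) :
    ∃ p, u p = 1 ∧ ∀ t, t ≠ p → u t = 0 := by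
  have hp : ∃ p, u p ≠ 0 := by
    by_contra hp
    push_neg at hp
    rw [Finset.sum_eq_zero (fun t _ => hp t)] at h
    omega
  obtain ⟨p, hp⟩ := hp
  have he := Finset.sum_erase_add Finset.univ u (Finset.mem_univ p)
  rw [h] at he
  have hup : u p = 1 := by omega
  have hz : (∑ t ∈ Finset.univ.erase p, u t) = 0 := by omega
  refine ⟨p, hup, fun t ht => ?_⟩
  exact Finset.sum_eq_zero_iff.mp hz t (Finset.mem_erase.mpr ⟨ht, Finset.mem_univ t⟩)

lemma rigid {a d k m : ℕ} (hd : 0 < d) (x y : Fin (k+1) → ℕ)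
    (hx : x ∈ Facts (aGens a d k) m) (hy : y ∈ Facts (aGens a d k) m)
    (hlen : fLen x = fLen y) (hdist : fDist x y ≤ 1) : x = y := by
  set n := aGens a d k with hn
  set u : Fin (k+1) → ℕ := fun t => x t - min (x t) (y t) with hu
  set v : Fin (k+1) → ℕ := fun t => y t - min (x t) (y t) with hv
  have hux : ∀ t, min (x t) (y t) + u t = x t := by intro t; simp only [hu]; omega
  have hvy : ∀ t, min (x t) (y t) + v t = y t := by intro t; simp only [hv]; omega
  have hsx : (∑ t, min (x t) (y t)) + (∑ t, u t) = fLen x := by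
    rw [← Finset.sum_add_distrib, fLen]
    exact Finset.sum_congr rfl fun t _ => hux t
  have hsy : (∑ t, min (x t) (y t)) + (∑ t, v t) = fLen y := by
    rw [← Finset.sum_add_distrib, fLen]
    exact Finset.sum_congr rfl fun t _ => hvy t
  have hdist' : max (fLen x) (fLen y) - (∑ t, min (x t) (y t)) ≤ 1 := hdist
  have huv : (∑ t, u t) = (∑ t, v t) := by omega
  have hule : (∑ t, u t) ≤ 1 := by omega
  have hwx : (∑ t, min (x t) (y t) * n t) + (∑ t, u t * n t) = m := by
    rw [← Finset.sum_add_distrib, ← hx]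
    exact Finset.sum_congr rfl fun t _ => by rw [← add_mul, hux t]
  have hwy : (∑ t, min (x t) (y t) * n t) + (∑ t, v t * n t) = m := by
    rw [← Finset.sum_add_distrib, ← hy]
    exact Finset.sum_congr rfl fun t _ => by rw [← add_mul, hvy t]
  have hwuv : (∑ t, u t * n t) = (∑ t, v t * n t) := by omega
  rcases Nat.lt_or_ge (∑ t, u t) 1 with h1 | h1
  · have hu0 : ∀ t, u t = 0 := fun t =>
      Finset.sum_eq_zero_iff.mp (by omega) t (Finset.mem_univ t)
    have hv0 : ∀ t, v t = 0 := fun t =>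
      Finset.sum_eq_zero_iff.mp (by omega) t (Finset.mem_univ t)
    funext t
    have h2 := hux t
    have h3 := hvy t
    rw [hu0 t] at h2
    rw [hv0 t] at h3
    omega
  · have hu1 : (∑ t, u t) = 1 := by omega
    obtain ⟨p, hp1, hp0⟩ := delta_of_sum_one u hu1
    obtain ⟨q, hq1, hq0⟩ := delta_of_sum_one v (by omega)
    have hup : (∑ t, u t * n t) = n p := by
      rw [Finset.sum_eq_single_of_mem p (Finset.mem_univ p)
        (fun t _ htp => by rw [hp0 t htp, zero_mul]), hp1, one_mul]
    have hvq : (∑ t, v t * n t) = n q := by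
      rw [Finset.sum_eq_single_of_mem q (Finset.mem_univ q)
        (fun t _ htq => by rw [hq0 t htq, zero_mul]), hq1, one_mul]
    have hnpq : n p = n q := by omega
    have hpq : p = q := by
      simp only [hn, aGens] at hnpq
      have : (p : ℕ) * d = (q : ℕ) * d := by omega
      exact Fin.ext (Nat.eq_of_mul_eq_mul_right hd this)
    exfalso
    have h2 := hux p
    have h3 := hvy p
    rw [hpq] at hp1
    simp only [hu] at hp1
    simp only [hv] at hq1
    omega

end ArithTwo

/-- In an arithmetic numerical monoid, any two equal-length
factorizations of an element are joined by a 2-chain of factorizations of that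
same length; hence `c_eq(m) ≤ 2`, with equality whenever `m` has two distinct
factorizations of equal length. -/
theorem arithmetic_equivalent_two (a d k : ℕ) (ha : 0 < a) (hd : 0 < d)
    (hk : 0 < k) (hgcd : Nat.gcd a d = 1) (hka : k < a)
    (m : ℕ) (hm : (Facts (aGens a d k) m).Nonempty) :
    (∀ z ∈ Facts (aGens a d k) m, ∀ z' ∈ Facts (aGens a d k) m,
      fLen z = fLen z' → ConnectsEq (aGens a d k) m 2 z z') ∧
    catEq (aGens a d k) m ≤ 2 ∧
    ((∃ z ∈ Facts (aGens a d k) m, ∃ z' ∈ Facts (aGens a d k) m,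
        z ≠ z' ∧ fLen z = fLen z') → catEq (aGens a d k) m = 2) := by
  set n := aGens a d k with hn
  have hfacts : ∀ z : Fin (k+1) → ℕ, (∑ i, z i * n i) = a * fLen z + d * ArithTwo.sOne z := by
    intro z
    simp only [hn, aGens, fLen, ArithTwo.sOne, Finset.mul_sum]
    rw [← Finset.sum_add_distrib]
    exact Finset.sum_congr rfl fun i _ => by ring
  have hmemm : ∀ z : Fin (k+1) → ℕ, z ∈ Facts n m ↔ a * fLen z + d * ArithTwo.sOne z = m := by
    intro z
    rw [Facts, Set.mem_setOf_eq, hfacts]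
  have part1 : ∀ z ∈ Facts n m, ∀ z' ∈ Facts n m, fLen z = fLen z' →
      ConnectsEq n m 2 z z' := by
    intro z hz z' hz' hlen
    have hz1 := (hmemm z).mp hz
    have hz1' := (hmemm z').mp hz'
    have hS : ArithTwo.sOne z' = ArithTwo.sOne z := by
      rw [← hlen] at hz1'
      have h2 : d * ArithTwo.sOne z = d * ArithTwo.sOne z' := by omega
      exact (Nat.eq_of_mul_eq_mul_left hd h2).symm
    obtain ⟨t, f, hf0, hfl, hfm, hfd⟩ :=
      ArithTwo.extract_chain z z' (ArithTwo.class_connect z z' hlen.symm hS)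
    have hfclass : ∀ i, fLen (f i) = fLen z ∧ ArithTwo.sOne (f i) = ArithTwo.sOne z :=
      fun i => ArithTwo.reach_sums (hfm i)
    refine ⟨t, f, hf0, hfl, ?_, fun i => (hfclass i).1, hfd⟩
    intro i
    rw [hmemm, (hfclass i).1, (hfclass i).2]
    exact hz1
  have part2 : catEq n m ≤ 2 := Nat.sInf_le part1
  refine ⟨part1, part2, ?_⟩
  rintro ⟨z, hz, z', hz', hne, hlen⟩
  refine le_antisymm part2 ?_
  refine le_csInf ⟨2, part1⟩ ?_
  intro b hb
  by_contra hb2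
  push_neg at hb2
  have hb1 : b ≤ 1 := by omega
  obtain ⟨t, f, hf0, hfl, hfm, hflen, hfd⟩ := hb z hz z' hz' hlen
  have hall : ∀ i : Fin (t+1), f i = z := by
    intro i
    induction i using Fin.induction with
    | zero => exact hf0
    | succ j ihj =>
      have hstep : f j.castSucc = f j.succ := by
        apply ArithTwo.rigid hd (f j.castSucc) (f j.succ) (hfm _) (hfm _)
        · rw [hflen j.castSucc, hflen j.succ]
        · exact le_trans (hfd j) hb1
      rw [← hstep]
      exact ihj
  have hlast := hall (Fin.last t)
  rw [hfl] at hlast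
  exact hne hlast.symm
end

section
/- Let M = ⟨a, a+d, …, a+kd⟩ be an arithmetic numerical monoid, m ∈ M, and l ∈ L(m). Then there exists a factorization z of m with |z| = l which is optimized, i.e. z = (α,0,…,0,β) or z = (α,0,…,0,1,0,…,0,β) with the entry 1 in coordinate i for some 1 ≤ i ≤ k−1, for some natural numbers α and β. -/
/-- A factorization (indexed by `Fin (k+1)`) is *optimized* if it has the form
`(α,0,…,0,β)` or `(α,0,…,0,1,0,…,0,β)` with the `1` in some interior coordinate. -/
def Optimized {k : ℕ} (z : Fin (k + 1) → ℕ) : Prop :=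
  (∀ i : Fin (k + 1), i ≠ 0 → i ≠ Fin.last k → z i = 0) ∨
  (∃ j : Fin (k + 1), j ≠ 0 ∧ j ≠ Fin.last k ∧ z j = 1 ∧
    ∀ i : Fin (k + 1), i ≠ 0 → i ≠ Fin.last k → i ≠ j → z i = 0)


/-- In an arithmetic numerical monoid, every length in the
length set of an element is realized by an optimized factorization. -/
theorem exists_optimized_factorization (a d k : ℕ) (ha : 0 < a) (hd : 0 < d)
    (hk : 0 < k) (hgcd : Nat.gcd a d = 1) (hka : k < a)
    (m : ℕ) (hm : (Facts (aGens a d k) m).Nonempty) :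
    ∀ l ∈ LSet (aGens a d k) m,
      ∃ z ∈ Facts (aGens a d k) m, fLen z = l ∧ Optimized z := by
  classical
  intro l hl
  obtain ⟨z, hz, hlen⟩ := hl
  set L := l with hLdef
  set S := ∑ i, z i * (i : ℕ) with hSdef
  have hzm : ∑ i, z i * (a + (i : ℕ) * d) = m := hz
  have hm' : a * L + d * S = m := by
    rw [← hzm, ← hlen]
    simp only [fLen, hSdef, Finset.mul_sum, ← Finset.sum_add_distrib]
    apply Finset.sum_congr rfl
    intro i _
    ring
  have hSL : S ≤ k * L := by
    rw [← hlen]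
    simp only [fLen, hSdef, Finset.mul_sum]
    apply Finset.sum_le_sum
    intro i _
    calc z i * (i : ℕ) ≤ z i * k := by
          exact Nat.mul_le_mul_left _ (Nat.lt_succ_iff.mp i.isLt)
      _ = k * z i := Nat.mul_comm _ _
  set β := S / k with hβdef
  set j := S % k with hjdef
  have hjk : j < k := Nat.mod_lt _ hk
  have hdm : k * β + j = S := Nat.div_add_mod S k
  have hβL : β ≤ L := by
    have : k * β ≤ k * L := le_trans (by omega) hSL
    exact Nat.le_of_mul_le_mul_left this hk
  have h0last : (0 : Fin (k + 1)) ≠ Fin.last k := by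
    simp [Fin.ext_iff]; omega
  by_cases hj0 : j = 0
  · -- z' = (α, 0, …, 0, β)
    set α := L - β with hαdef
    set z' : Fin (k + 1) → ℕ :=
      fun i => if i = 0 then α else if i = Fin.last k then β else 0 with hz'def
    have hsum : ∀ g : Fin (k + 1) → ℕ,
        ∑ i, z' i * g i = α * g 0 + β * g (Fin.last k) := by
      intro g
      have hpt : ∀ i, z' i * g i =
          (if i = 0 then α * g 0 else 0) +
          (if i = Fin.last k then β * g (Fin.last k) else 0) := by
        intro i
        by_cases h1 : i = 0
        · subst h1; simp [hz'def, h0last]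
        · by_cases h2 : i = Fin.last k
          · subst h2; simp [hz'def, Ne.symm h0last, h1]
          · simp [hz'def, h1, h2]
      rw [Finset.sum_congr rfl (fun i _ => hpt i), Finset.sum_add_distrib,
        Finset.sum_ite_eq', Finset.sum_ite_eq']
      simp
    have hfacts : z' ∈ Facts (aGens a d k) m := by
      show ∑ i, z' i * aGens a d k i = m
      have := hsum (aGens a d k)
      simp only [aGens, Fin.val_zero, Fin.val_last] at this
      simp only [aGens]
      rw [this, ← hm']
      have hαβ : α + β = L := by omega
      have hkβ : k * β = S := by omega
      calc α * (a + 0 * d) + β * (a + k * d)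
          = a * (α + β) + d * (k * β) := by ring
        _ = a * L + d * S := by rw [hαβ, hkβ]
    refine ⟨z', hfacts, ?_, ?_⟩
    · have := hsum (fun _ => 1)
      simp only [mul_one] at this
      simp only [fLen, this]
      omega
    · left
      intro i hi hiL
      simp [hz'def, hi, hiL]
  · -- z' = (α, 0, …, 0, 1, 0, …, 0, β)
    have hβL' : β + 1 ≤ L := by
      have h1 : k * β < k * L := by omega
      have := Nat.lt_of_mul_lt_mul_left h1
      omega
    set α := L - β - 1 with hαdef
    have hjk1 : j < k + 1 := by omega
    set jF : Fin (k + 1) := ⟨j, hjk1⟩ with hjFdef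
    have hjF0 : jF ≠ 0 := by simp [hjFdef, Fin.ext_iff]; omega
    have hjFl : jF ≠ Fin.last k := by simp [hjFdef, Fin.ext_iff]; omega
    set z' : Fin (k + 1) → ℕ :=
      fun i => if i = 0 then α else if i = Fin.last k then β
        else if i = jF then 1 else 0 with hz'def
    have hsum : ∀ g : Fin (k + 1) → ℕ,
        ∑ i, z' i * g i = α * g 0 + β * g (Fin.last k) + g jF := by
      intro g
      have hpt : ∀ i, z' i * g i =
          (if i = 0 then α * g 0 else 0) +
          (if i = Fin.last k then β * g (Fin.last k) else 0) +
          (if i = jF then g jF else 0) := by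
        intro i
        by_cases h1 : i = 0
        · subst h1; simp [hz'def, h0last, Ne.symm hjF0]
        · by_cases h2 : i = Fin.last k
          · subst h2; simp [hz'def, Ne.symm h0last, h1, Ne.symm hjFl]
          · by_cases h3 : i = jF
            · subst h3; simp [hz'def, hjF0, hjFl]
            · simp [hz'def, h1, h2, h3]
      rw [Finset.sum_congr rfl (fun i _ => hpt i), Finset.sum_add_distrib,
        Finset.sum_add_distrib, Finset.sum_ite_eq', Finset.sum_ite_eq',
        Finset.sum_ite_eq']
      simp
    have hfacts : z' ∈ Facts (aGens a d k) m := by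
      show ∑ i, z' i * aGens a d k i = m
      have := hsum (aGens a d k)
      simp only [aGens, Fin.val_zero, Fin.val_last] at this
      simp only [aGens]
      rw [this, ← hm']
      have hαβ : α + β + 1 = L := by omega
      have hkβ : k * β + j = S := hdm
      calc α * (a + 0 * d) + β * (a + k * d) + (a + j * d)
          = a * (α + β + 1) + d * (k * β + j) := by ring
        _ = a * L + d * S := by rw [hαβ, hkβ]
    refine ⟨z', hfacts, ?_, ?_⟩
    · have := hsum (fun _ => 1)
      simp only [mul_one] at this
      simp only [fLen, this]
      omega
    · right
      refine ⟨jF, hjF0, hjFl, ?_, ?_⟩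
      · simp [hz'def, hjF0, hjFl]
      · intro i hi hiL hij
        simp [hz'def, hi, hiL, hij]
end

section
/- Let M = ⟨a, a+d, …, a+kd⟩ be an arithmetic numerical monoid, m ∈ M, and let z ∈ Z(m) be an optimized factorization whose length is not the minimum of L(m). Then the first coordinate α of z satisfies α ≥ ⌈a/k⌉ + d − 1. -/
/-- In an arithmetic numerical monoid, an optimized
factorization of non-minimal length has first coordinate
`α ≥ ⌈a/k⌉ + d − 1`, i.e. `α + 1 ≥ ⌈a/k⌉ + d` (with `⌈a/k⌉ = (a+k-1)/k`). -/
theorem optimized_first_coordinate_bound (a d k : ℕ) (ha : 0 < a) (hd : 0 < d)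
    (hk : 0 < k) (hgcd : Nat.gcd a d = 1) (hka : k < a)
    (m : ℕ) (z : Fin (k + 1) → ℕ) (hz : z ∈ Facts (aGens a d k) m)
    (hopt : Optimized z) (hnotmin : fLen z ≠ sInf (LSet (aGens a d k) m)) :
    (a + k - 1) / k + d ≤ z 0 + 1 := by
  classical
  -- decomposition of the value of any factorization
  have decomp : ∀ w : Fin (k+1) → ℕ, ∑ i, w i * aGens a d k i
      = a * (∑ i, w i) + d * ∑ i : Fin (k+1), (i : ℕ) * w i := by
    intro w
    rw [Finset.mul_sum, Finset.mul_sum, ← Finset.sum_add_distrib]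
    refine Finset.sum_congr rfl fun i _ => ?_
    show w i * (a + (i : ℕ) * d) = _
    ring
  -- the minimal-length factorization
  have hne : (LSet (aGens a d k) m).Nonempty := ⟨fLen z, z, hz, rfl⟩
  obtain ⟨w, hw, hwlen⟩ := Nat.sInf_mem hne
  have hle : sInf (LSet (aGens a d k) m) ≤ fLen z := Nat.sInf_le ⟨z, hz, rfl⟩
  have hlt : fLen w < fLen z := by
    rw [hwlen]; exact lt_of_le_of_ne hle (fun h => hnotmin h.symm)
  have hzm : ∑ i, z i * aGens a d k i = m := hz
  have hwm : ∑ i, w i * aGens a d k i = m := hw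
  set L : ℕ := fLen z with hLdef
  set Lw : ℕ := fLen w with hLwdef
  set S : ℕ := ∑ i : Fin (k+1), (i : ℕ) * z i with hSdef
  set Sw : ℕ := ∑ i : Fin (k+1), (i : ℕ) * w i with hSwdef
  have hmz : m = a * L + d * S := by rw [← hzm, decomp]; rfl
  have hmw : m = a * Lw + d * Sw := by rw [← hwm, decomp]; rfl
  -- length congruence : d ∣ L - Lw, hence Lw + d ≤ L
  have hSle : S ≤ Sw := by
    by_contra hcon
    push_neg at hcon
    have h1 : a * Lw + a ≤ a * L := by
      have : Lw + 1 ≤ L := hlt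
      calc a * Lw + a = a * (Lw + 1) := by ring
        _ ≤ a * L := Nat.mul_le_mul_left a this
    have h2 : d * Sw + d ≤ d * S := by
      have : Sw + 1 ≤ S := hcon
      calc d * Sw + d = d * (Sw + 1) := by ring
        _ ≤ d * S := Nat.mul_le_mul_left d this
    omega
  have hdvd : d ∣ (L - Lw) := by
    obtain ⟨u, hu⟩ : ∃ u, L = Lw + u := ⟨L - Lw, by omega⟩
    obtain ⟨v, hv⟩ : ∃ v, Sw = S + v := ⟨Sw - S, by omega⟩
    have hau : a * u = d * v := by
      have h := hmz
      rw [hmw, hu, hv] at h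
      have e1 : a * (Lw + u) = a * Lw + a * u := by ring
      have e2 : d * (S + v) = d * S + d * v := by ring
      omega
    have hdu : d ∣ a * u := ⟨v, hau⟩
    have hco : Nat.Coprime d a := Nat.coprime_comm.mp hgcd
    have : d ∣ u := hco.dvd_of_dvd_mul_left hdu
    rw [hu]; simpa using this
  have hLwd : Lw + d ≤ L := by
    have : 0 < L - Lw := by omega
    have := Nat.le_of_dvd this hdvd
    omega
  -- upper bound for m from the short factorization
  have hmub : m ≤ Lw * (a + k * d) := by
    rw [← hwm]
    calc ∑ i, w i * aGens a d k i ≤ ∑ i, w i * (a + k * d) := by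
          refine Finset.sum_le_sum fun i _ => ?_
          exact Nat.mul_le_mul_left _ (by
            show a + (i : ℕ) * d ≤ a + k * d
            have : (i : ℕ) ≤ k := Fin.is_le i
            exact Nat.add_le_add_left (Nat.mul_le_mul_right d this) a)
      _ = Lw * (a + k * d) := by rw [← Finset.sum_mul]; rfl
  -- T := sum of (k - i) * z i
  set T : ℕ := ∑ i : Fin (k+1), (k - (i : ℕ)) * z i with hTdef
  have hkL : k * L = S + T := by
    rw [hLdef, fLen, Finset.mul_sum, hSdef, hTdef, ← Finset.sum_add_distrib]
    refine Finset.sum_congr rfl fun i _ => ?_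
    have hi : (i : ℕ) ≤ k := Fin.is_le i
    have h : (i : ℕ) + (k - (i : ℕ)) = k := by omega
    calc k * z i = ((i : ℕ) + (k - (i : ℕ))) * z i := by rw [h]
      _ = (i : ℕ) * z i + (k - (i : ℕ)) * z i := by ring
  -- bound T using the optimized structure
  have hT : T ≤ k * z 0 + (k - 1) := by
    have h0 : (0 : Fin (k+1)) ∈ (Finset.univ : Finset (Fin (k+1))) := Finset.mem_univ _
    have hsplit : T = (k - ((0 : Fin (k+1)) : ℕ)) * z 0
        + ∑ i ∈ Finset.univ.erase (0 : Fin (k+1)), (k - (i : ℕ)) * z i := by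
      rw [hTdef, ← Finset.add_sum_erase _ _ h0]
    have hz0 : ((0 : Fin (k+1)) : ℕ) = 0 := rfl
    rcases hopt with hcase | ⟨j, hj0, hjl, hj1, hrest⟩
    · have : ∑ i ∈ Finset.univ.erase (0 : Fin (k+1)), (k - (i : ℕ)) * z i = 0 := by
        refine Finset.sum_eq_zero fun i hi => ?_
        have hi0 : i ≠ 0 := (Finset.mem_erase.mp hi).1
        by_cases hil : i = Fin.last k
        · simp [hil, Fin.val_last]
        · rw [hcase i hi0 hil]; ring
      simp only [Fin.val_zero, Nat.sub_zero] at hsplit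
      rw [hsplit, this]; omega
    · have hjmem : j ∈ Finset.univ.erase (0 : Fin (k+1)) := by
        simp [Finset.mem_erase, hj0]
      have : ∑ i ∈ Finset.univ.erase (0 : Fin (k+1)), (k - (i : ℕ)) * z i
          = (k - (j : ℕ)) * z j := by
        refine Finset.sum_eq_single_of_mem j hjmem fun i hi hij => ?_
        have hi0 : i ≠ 0 := (Finset.mem_erase.mp hi).1
        by_cases hil : i = Fin.last k
        · simp [hil, Fin.val_last]
        · rw [hrest i hi0 hil hij]; ring
      have hjv : 1 ≤ (j : ℕ) := by
        rcases Nat.eq_zero_or_pos (j : ℕ) with h | h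
        · exact absurd (Fin.ext h) hj0
        · exact h
      simp only [Fin.val_zero, Nat.sub_zero] at hsplit
      rw [hsplit, this, hj1, mul_one]
      have hjk : (j : ℕ) ≤ k := Fin.is_le j
      omega
  -- main inequality : a + k*d ≤ T
  have hmain : a + k * d ≤ T := by
    have h1 : m + d * (a + k * d) ≤ L * (a + k * d) := by
      calc m + d * (a + k * d) ≤ Lw * (a + k * d) + d * (a + k * d) :=
            Nat.add_le_add_right hmub _
        _ = (Lw + d) * (a + k * d) := by ring
        _ ≤ L * (a + k * d) := Nat.mul_le_mul_right _ hLwd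
    have h2 : L * (a + k * d) = a * L + d * S + d * T := by
      calc L * (a + k * d) = a * L + d * (k * L) := by ring
        _ = a * L + d * (S + T) := by rw [hkL]
        _ = a * L + d * S + d * T := by ring
    rw [hmz, h2] at h1
    have h3 : d * (a + k * d) ≤ d * T := by omega
    exact Nat.le_of_mul_le_mul_left h3 hd
  -- conclude
  have hkey : a + k * d ≤ k * z 0 + (k - 1) := le_trans hmain hT
  set q : ℕ := (a + k - 1) / k with hqdef
  have hq : q * k ≤ a + k - 1 := Nat.div_mul_le_self _ _
  by_contra hcon
  push_neg at hcon
  have hge : z 0 + 2 ≤ q + d := by omega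
  have hmul : k * (z 0 + 2) ≤ k * (q + d) := Nat.mul_le_mul_left k hge
  have e1 : k * (z 0 + 2) = k * z 0 + 2 * k := by ring
  have e2 : k * (q + d) = k * q + k * d := by ring
  have e3 : q * k = k * q := by ring
  omega
end

section
/- Let M = ⟨a, a+d, …, a+kd⟩ be an arithmetic numerical monoid and set c = ⌈a/k⌉ + d and b = a·c. Then b has a factorization z₀ ∈ Z(b) with first coordinate 0 (i.e. using only the generators a+d, …, a+kd) and |z₀| = ⌈a/k⌉. Moreover, for every m ∈ M and every z ∈ Z(m) whose first coordinate is at least c, the vector Bz := z − c·e₀ + z₀ (where e₀ is the first standard basis vector) is a factorization of m with |Bz| = |z| − d and d(z, Bz) = c = ⌈a/k⌉ + d. -/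
/-- In an arithmetic numerical monoid, setting
`c = ⌈a/k⌉ + d` and `b = a*c`, the element `b` has a factorization `z₀` with
first coordinate `0` and length `⌈a/k⌉`; and for every factorization `z` of any
element `m` with first coordinate at least `c`, the vector
`Bz = z - c•e₀ + z₀` is a factorization of `m` with `|Bz| = |z| - d` and
`d(z, Bz) = c`. (Here `⌈a/k⌉ = (a+k-1)/k`.) -/
theorem length_decreasing_move (a d k : ℕ) (ha : 0 < a) (hd : 0 < d)
    (hk : 0 < k) (hgcd : Nat.gcd a d = 1) (hka : k < a) :
    ∃ z₀ ∈ Facts (aGens a d k) (a * ((a + k - 1) / k + d)),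
      z₀ 0 = 0 ∧ fLen z₀ = (a + k - 1) / k ∧
      ∀ m : ℕ, ∀ z ∈ Facts (aGens a d k) m, (a + k - 1) / k + d ≤ z 0 →
        ∀ w : Fin (k + 1) → ℕ,
          w = (fun i => z i + z₀ i - if i = 0 then (a + k - 1) / k + d else 0) →
          w ∈ Facts (aGens a d k) m ∧
          fLen w = fLen z - d ∧
          fDist z w = (a + k - 1) / k + d := by
  have hdm := Nat.div_add_mod (a - 1) k
  have hml : (a - 1) % k < k := Nat.mod_lt _ hk
  set q' := (a - 1) / k with hq'def
  set s := (a - 1) % k + 1 with hsdef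
  have hq : (a + k - 1) / k = q' + 1 := by
    have h1 : a + k - 1 = (a - 1) + k := by omega
    rw [h1, Nat.add_div_right _ hk]
  have ha' : a = k * q' + s := by rw [hsdef, ← Nat.add_assoc, hdm]; omega
  have hs1 : 1 ≤ s := by omega
  have hsk : s ≤ k := by omega
  set z₀ : Fin (k+1) → ℕ :=
    fun i => (if i = Fin.last k then q' else 0) +
      (if i = (⟨s, by omega⟩ : Fin (k+1)) then 1 else 0) with hz₀def
  have hz₀0 : z₀ 0 = 0 := by
    simp only [hz₀def]
    rw [if_neg, if_neg]
    · simp [Fin.ext_iff]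
    · simp [Fin.ext_iff, Fin.val_last]; omega
  have hlen0 : fLen z₀ = q' + 1 := by
    simp [fLen, hz₀def, Finset.sum_add_distrib, Finset.sum_ite_eq']
  have hfact0 : ∑ i, z₀ i * aGens a d k i = a * ((q' + 1) + d) := by
    simp only [hz₀def, aGens, add_mul, ite_mul, zero_mul]
    rw [Finset.sum_add_distrib, Finset.sum_ite_eq', Finset.sum_ite_eq']
    simp only [Finset.mem_univ, if_true, Fin.val_last]
    rw [ha']; ring
  refine ⟨z₀, ?_, hz₀0, by rw [hq]; exact hlen0, ?_⟩
  · show ∑ i, z₀ i * aGens a d k i = a * ((a + k - 1) / k + d)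
    rw [hq]; exact hfact0
  intro m z hz hz0 w hw
  rw [hq] at hz0 hw
  have hz' : ∑ i, z i * aGens a d k i = m := hz
  subst hw
  set c := q' + 1 + d with hcdef
  have hsum_ite : ∀ x : ℕ, ∑ i : Fin (k+1), (if i = 0 then x else 0) = x := by
    intro x; rw [Finset.sum_ite_eq']; simp
  have hz0' : z 0 ≤ fLen z := by
    exact Finset.single_le_sum (fun i _ => Nat.zero_le (z i)) (Finset.mem_univ 0)
  obtain ⟨u, hu⟩ : ∃ u, z 0 = u + c := ⟨z 0 - c, by omega⟩
  -- membership
  have hmem : ∑ i, (z i + z₀ i - if i = 0 then c else 0) * aGens a d k i = m := by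
    have h1 : ∑ i, (z i + z₀ i) * aGens a d k i = m + a * ((q' + 1) + d) := by
      simp only [add_mul, Finset.sum_add_distrib, hz', hfact0]; rfl
    have h2 : ∑ i, (z i + z₀ i - if i = 0 then c else 0) * aGens a d k i
        + ∑ i : Fin (k+1), (if i = 0 then c * a else 0)
        = ∑ i, (z i + z₀ i) * aGens a d k i := by
      rw [← Finset.sum_add_distrib]
      refine Finset.sum_congr rfl fun i _ => ?_
      by_cases h : i = 0
      · subst h
        simp only [reduceIte, hz₀0, aGens, Fin.val_zero, zero_mul, add_zero, Nat.add_zero]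
        rw [hu, Nat.add_sub_cancel]; ring
      · simp [h]
    rw [hsum_ite] at h2
    have h3 : c * a = a * ((q' + 1) + d) := by rw [hcdef]; ring
    omega
  refine ⟨hmem, ?_, ?_⟩
  · -- length
    have h2 : ∑ i, (z i + z₀ i - if i = 0 then c else 0)
        + ∑ i : Fin (k+1), (if i = 0 then c else 0)
        = ∑ i, (z i + z₀ i) := by
      rw [← Finset.sum_add_distrib]
      refine Finset.sum_congr rfl fun i _ => ?_
      by_cases h : i = 0
      · subst h
        simp only [reduceIte, hz₀0, add_zero]
        omega
      · simp [h]
    rw [hsum_ite] at h2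
    have h1 : ∑ i, (z i + z₀ i) = fLen z + (q' + 1) := by
      rw [Finset.sum_add_distrib, ← hlen0]; rfl
    show fLen _ = fLen z - d
    simp only [fLen] at h1 hz0' ⊢
    beta_reduce
    omega
  · -- distance
    rw [hq]
    have hmin : ∑ i : Fin (k+1), min (z i) (z i + z₀ i - if i = 0 then c else 0)
        + ∑ i : Fin (k+1), (if i = 0 then c else 0) = ∑ i, z i := by
      rw [← Finset.sum_add_distrib]
      refine Finset.sum_congr rfl fun i _ => ?_
      by_cases h : i = 0
      · subst h
        simp only [reduceIte, hz₀0, add_zero]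
        omega
      · simp only [if_neg h, add_zero]
        omega
    rw [hsum_ite] at hmin
    have h2 : ∑ i, (z i + z₀ i - if i = 0 then c else 0)
        + ∑ i : Fin (k+1), (if i = 0 then c else 0)
        = ∑ i, (z i + z₀ i) := by
      rw [← Finset.sum_add_distrib]
      refine Finset.sum_congr rfl fun i _ => ?_
      by_cases h : i = 0
      · subst h
        simp only [reduceIte, hz₀0, add_zero]
        omega
      · simp [h]
    rw [hsum_ite] at h2
    have h1 : ∑ i, (z i + z₀ i) = fLen z + (q' + 1) := by
      rw [Finset.sum_add_distrib, ← hlen0]; rfl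
    simp only [fDist, fLen] at h1 hz0' ⊢
    beta_reduce
    omega
end

section
/- Let M = ⟨a, a+d, …, a+kd⟩ be an arithmetic numerical monoid and m ∈ M an element with c(m) ∉ {0,2}. Then c_adj(m) = c(m) = c(M). -/
namespace ANM
open Finset

/-- weight -/
def fw {K : ℕ} (z : Fin K → ℕ) : ℕ := ∑ i, i.val * z i

lemma fLen_add {K : ℕ} (x y : Fin K → ℕ) : fLen (x + y) = fLen x + fLen y := by
  simp [fLen, Finset.sum_add_distrib]

lemma fw_add {K : ℕ} (x y : Fin K → ℕ) : fw (x + y) = fw x + fw y := by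
  simp [fw, Pi.add_apply, Nat.mul_add, Finset.sum_add_distrib]

lemma mem_facts {a d k m : ℕ} {z : Fin (k+1) → ℕ} :
    z ∈ Facts (aGens a d k) m ↔ fLen z * a + fw z * d = m := by
  unfold Facts aGens fLen fw
  have h : (∑ i, z i * (a + (i:ℕ) * d)) = (∑ i, z i) * a + (∑ i : Fin (k+1), i.val * z i) * d := by
    rw [Finset.sum_mul, Finset.sum_mul, ← Finset.sum_add_distrib]
    exact Finset.sum_congr rfl fun i _ => by ring
  simp only [Set.mem_setOf_eq, h]

lemma fw_le {k : ℕ} (z : Fin (k+1) → ℕ) : fw z ≤ k * fLen z := by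
  unfold fw fLen
  rw [Finset.mul_sum]
  exact Finset.sum_le_sum fun i _ => Nat.mul_le_mul_right _ (Fin.is_le i)

lemma fDist_comm {K : ℕ} (x y : Fin K → ℕ) : fDist x y = fDist y x := by
  unfold fDist
  rw [max_comm]
  congr 1
  exact Finset.sum_congr rfl fun i _ => min_comm _ _

lemma sum_if_eq {k : ℕ} (c v : ℕ) (hc : c < k+1) :
    ∑ i : Fin (k+1), (if (i:ℕ) = c then v else 0) = v := by
  have h : ∀ i : Fin (k+1), ((i:ℕ) = c) = (i = ⟨c, hc⟩) := fun i => by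
    rw [Fin.ext_iff]
  simp only [h]
  simp

lemma sum_if_eq_mul {k : ℕ} (c v : ℕ) (hc : c < k+1) :
    ∑ i : Fin (k+1), (i:ℕ) * (if (i:ℕ) = c then v else 0) = c * v := by
  have h : ∀ i : Fin (k+1), ((i:ℕ) = c) = (i = ⟨c, hc⟩) := fun i => by
    rw [Fin.ext_iff]
  simp only [h, mul_ite, mul_zero]
  simp

/-- single-index vector -/
def sing {K : ℕ} (i : Fin K) (c : ℕ) : Fin K → ℕ := fun l => if l = i then c else 0

lemma fLen_sing {K : ℕ} (i : Fin K) (c : ℕ) : fLen (sing i c) = c := by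
  simp [fLen, sing]

lemma fw_sing {K : ℕ} (i : Fin K) (c : ℕ) : fw (sing i c) = (i:ℕ) * c := by
  simp [fw, sing, mul_ite, mul_zero]

/-- greedy factorization with length ℓ and weight s -/
def greedy (k ℓ s : ℕ) : Fin (k+1) → ℕ := fun i =>
  (if (i:ℕ) = k then s / k else 0) +
  (if (i:ℕ) = s % k then (if 0 < s % k then 1 else 0) else 0) +
  (if (i:ℕ) = 0 then ℓ - s / k - (if 0 < s % k then 1 else 0) else 0)

lemma greedy_len {k ℓ s : ℕ} (hk : 0 < k) (hs : s ≤ k * ℓ) : fLen (greedy k ℓ s) = ℓ := by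
  unfold fLen greedy
  rw [Finset.sum_add_distrib, Finset.sum_add_distrib,
    sum_if_eq k _ (by omega), sum_if_eq (s % k) _ (Nat.lt_succ_of_lt (Nat.mod_lt s hk)),
    sum_if_eq 0 _ (by omega)]
  have h2 := Nat.mod_lt s hk
  have h3 : k * (s / k) + s % k = s := Nat.div_add_mod s k
  have h4 : s / k ≤ ℓ := by
    have := Nat.div_le_div_right (c := k) hs
    rwa [Nat.mul_div_cancel_left ℓ hk] at this
  rcases Nat.eq_zero_or_pos (s % k) with h | h
  · simp only [h, Nat.lt_irrefl, if_false]
    omega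
  · simp only [h, if_true]
    have h5 : s / k < ℓ := by
      by_contra hcon
      push_neg at hcon
      have : k * ℓ ≤ k * (s / k) := Nat.mul_le_mul_left _ hcon
      omega
    omega

lemma greedy_w {k ℓ s : ℕ} (hk : 0 < k) (hs : s ≤ k * ℓ) : fw (greedy k ℓ s) = s := by
  unfold fw greedy
  simp only [Nat.mul_add]
  rw [Finset.sum_add_distrib, Finset.sum_add_distrib,
    sum_if_eq_mul k _ (by omega), sum_if_eq_mul (s % k) _ (Nat.lt_succ_of_lt (Nat.mod_lt s hk)),
    sum_if_eq_mul 0 _ (by omega)]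
  have h3 : k * (s / k) + s % k = s := Nat.div_add_mod s k
  rcases Nat.eq_zero_or_pos (s % k) with h | h
  · simp only [h]; omega
  · simp only [h, if_true]; omega

lemma greedy_facts {a d k m ℓ s : ℕ} (hk : 0 < k) (hs : s ≤ k * ℓ)
    (hm : ℓ * a + s * d = m) : greedy k ℓ s ∈ Facts (aGens a d k) m := by
  rw [mem_facts, greedy_len hk hs, greedy_w hk hs]; exact hm


lemma sum_sub {K : ℕ} (f g : Fin K → ℕ) (h : ∀ i, g i ≤ f i) :
    ∑ i, (f i - g i) = (∑ i, f i) - ∑ i, g i := by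
  have h1 : (∑ i, (f i - g i)) + ∑ i, g i = ∑ i, f i := by
    rw [← Finset.sum_add_distrib]
    exact Finset.sum_congr rfl fun i _ => by have := h i; omega
  omega

/-- relation between two factorizations of the same element with different lengths -/
lemma len_rel {a d k m : ℕ} (hd : 0 < d) (hgcd : Nat.gcd a d = 1)
    {x y : Fin (k+1) → ℕ} (hx : fLen x * a + fw x * d = m) (hy : fLen y * a + fw y * d = m)
    (h : fLen x < fLen y) :
    ∃ j : ℕ, 0 < j ∧ fLen y = fLen x + d * j ∧ fw x = fw y + a * j := by
  have h0 : fLen x * a ≤ fLen y * a := Nat.mul_le_mul_right a h.le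
  have h1 : fw y * d ≤ fw x * d := by omega
  have h2 : fw y ≤ fw x := Nat.le_of_mul_le_mul_right h1 hd
  have h3 : (fLen y - fLen x) * a = (fw x - fw y) * d := by
    have hx' : (fLen x : ℤ) * a + fw x * d = m := by exact_mod_cast hx
    have hy' : (fLen y : ℤ) * a + fw y * d = m := by exact_mod_cast hy
    zify [le_of_lt h, h2]
    linear_combination hy' - hx'
  have h4 : d ∣ (fLen y - fLen x) * a := ⟨fw x - fw y, by rw [h3]; ring⟩
  have h5 : d ∣ (fLen y - fLen x) := by
    have hco : Nat.Coprime d a := (Nat.coprime_comm.mp hgcd)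
    exact hco.dvd_of_dvd_mul_right h4
  obtain ⟨j, hj⟩ := h5
  refine ⟨j, ?_, by omega, ?_⟩
  · rcases Nat.eq_zero_or_pos j with rfl | hj'
    · omega
    · exact hj'
  · -- (d*j)*a = (fw x - fw y)*d ⇒ fw x - fw y = a*j
    rw [hj] at h3
    have : d * (a * j) = d * (fw x - fw y) := by
      rw [show d * (a * j) = d * j * a by ring, h3]; ring
    have := Nat.eq_of_mul_eq_mul_left hd this
    omega

/-- equal lengths ⇒ equal weights -/
lemma w_eq {a d k m : ℕ} (hd : 0 < d)
    {x y : Fin (k+1) → ℕ} (hx : fLen x * a + fw x * d = m) (hy : fLen y * a + fw y * d = m)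
    (h : fLen x = fLen y) : fw x = fw y := by
  rw [h] at hx
  have : fw x * d = fw y * d := by omega
  exact Nat.eq_of_mul_eq_mul_right hd this

/-- gcd decomposition -/
lemma decomp {K : ℕ} (x y : Fin K → ℕ) :
    ∃ g u v : Fin K → ℕ, x = g + u ∧ y = g + v ∧ (∀ i, u i = 0 ∨ v i = 0) ∧
      (∀ i, g i = min (x i) (y i)) := by
  refine ⟨fun i => min (x i) (y i), fun i => x i - min (x i) (y i),
    fun i => y i - min (x i) (y i), ?_, ?_, ?_, fun i => rfl⟩
  · funext i; simp only [Pi.add_apply]; omega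
  · funext i; simp only [Pi.add_apply]; omega
  · intro i; dsimp only; omega

/-- `q = ⌈a/k⌉` basic bounds -/
lemma ceil_le {a k L : ℕ} (hk : 0 < k) (h : a ≤ k * L) : (a + k - 1) / k ≤ L := by
  have : a + k - 1 < (L + 1) * k := by
    have : (L+1)*k = k*L + k := by ring
    omega
  have := (Nat.div_lt_iff_lt_mul hk).mpr this
  omega

lemma ceil_ge {a k : ℕ} (hk : 0 < k) : a ≤ k * ((a + k - 1) / k) := by
  rcases Nat.eq_zero_or_pos a with rfl | ha
  · simp
  have h2 := Nat.div_add_mod (a + k - 1) k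
  have h5 : (a + k - 1) % k < k := Nat.mod_lt _ hk
  omega

lemma ceil_lt {a k : ℕ} (hk : 0 < k) (ha : 0 < a) : k * ((a + k - 1) / k) < a + k := by
  have h2 := Nat.div_add_mod (a + k - 1) k
  have h5 : (a + k - 1) % k < k := Nat.mod_lt _ hk
  omega

lemma ceil_pos {a k : ℕ} (hk : 0 < k) (ha : 0 < a) : 0 < (a + k - 1) / k := by
  have h := ceil_ge (a := a) hk
  rcases Nat.eq_zero_or_pos ((a + k - 1) / k) with h0 | h0
  · rw [h0, mul_zero] at h; omega
  · exact h0


lemma sum_min_decomp {K : ℕ} {x y g u v : Fin K → ℕ} (hx : x = g + u) (hy : y = g + v)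
    (hdisj : ∀ i, u i = 0 ∨ v i = 0) :
    ∑ i, min (x i) (y i) = fLen g := by
  unfold fLen
  refine Finset.sum_congr rfl fun i _ => ?_
  rw [hx, hy]
  simp only [Pi.add_apply]
  rcases hdisj i with h | h <;> omega

/-- distance between factorizations of different lengths is at least q + d -/
lemma dist_lower_ne {a d k m : ℕ} (ha : 0 < a) (hd : 0 < d) (hk : 0 < k)
    (hgcd : Nat.gcd a d = 1)
    {x y : Fin (k+1) → ℕ} (hx : x ∈ Facts (aGens a d k) m) (hy : y ∈ Facts (aGens a d k) m)
    (h : fLen x < fLen y) : (a + k - 1) / k + d ≤ fDist x y := by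
  rw [mem_facts] at hx hy
  obtain ⟨g, u, v, hxg, hyg, hdisj, -⟩ := decomp x y
  have hlx : fLen x = fLen g + fLen u := by rw [hxg, fLen_add]
  have hly : fLen y = fLen g + fLen v := by rw [hyg, fLen_add]
  have hwx : fw x = fw g + fw u := by rw [hxg, fw_add]
  have hwy : fw y = fw g + fw v := by rw [hyg, fw_add]
  have hmin := sum_min_decomp hxg hyg hdisj
  -- u, v are factorizations of m - (stuff of g)
  have hx' : fLen g * a + fLen u * a + (fw g * d + fw u * d) = m := by
    have h' : (fLen g + fLen u) * a + (fw g + fw u) * d = m := by rw [← hlx, ← hwx]; exact hx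
    rw [Nat.add_mul, Nat.add_mul] at h'; omega
  have hy' : fLen g * a + fLen v * a + (fw g * d + fw v * d) = m := by
    have h' : (fLen g + fLen v) * a + (fw g + fw v) * d = m := by rw [← hly, ← hwy]; exact hy
    rw [Nat.add_mul, Nat.add_mul] at h'; omega
  have hu : fLen u * a + fw u * d = m - (fLen g * a + fw g * d) := by omega
  have hv : fLen v * a + fw v * d = m - (fLen g * a + fw g * d) := by omega
  have hl : fLen u < fLen v := by omega
  obtain ⟨j, hj0, hjl, hjw⟩ := len_rel hd hgcd hu hv hl
  have hwu : a ≤ fw u := by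
    have : a * 1 ≤ a * j := Nat.mul_le_mul_left a hj0
    omega
  have hub : fw u ≤ k * fLen u := fw_le u
  have hq : (a + k - 1) / k ≤ fLen u := ceil_le hk (by omega)
  have hdj : d * 1 ≤ d * j := Nat.mul_le_mul_left d hj0
  unfold fDist
  rw [hmin]
  omega

lemma len_one {K : ℕ} {u : Fin K → ℕ} (h : fLen u = 1) : ∃ i, u = sing i 1 := by
  unfold fLen at h
  by_cases hK : ∃ i, 0 < u i
  · obtain ⟨i, hi⟩ := hK
    have hsplit := Finset.add_sum_erase Finset.univ u (Finset.mem_univ i)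
    have hrest : ∑ l ∈ Finset.univ.erase i, u l = 0 := by omega
    refine ⟨i, funext fun l => ?_⟩
    unfold sing
    by_cases hl : l = i
    · subst hl; simp only [if_true]; omega
    · simp only [hl, if_false]
      exact Finset.sum_eq_zero_iff.mp hrest l (Finset.mem_erase.mpr ⟨hl, Finset.mem_univ l⟩)
  · push_neg at hK
    have : ∑ i, u i = 0 := Finset.sum_eq_zero fun i _ => by have := hK i; omega
    omega

/-- distinct factorizations of the same length have distance at least 2 -/
lemma dist_lower_eq {a d k m : ℕ} (hd : 0 < d)
    {x y : Fin (k+1) → ℕ} (hx : x ∈ Facts (aGens a d k) m) (hy : y ∈ Facts (aGens a d k) m)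
    (hlen : fLen x = fLen y) (hne : x ≠ y) : 2 ≤ fDist x y := by
  rw [mem_facts] at hx hy
  obtain ⟨g, u, v, hxg, hyg, hdisj, -⟩ := decomp x y
  have hlx : fLen x = fLen g + fLen u := by rw [hxg, fLen_add]
  have hly : fLen y = fLen g + fLen v := by rw [hyg, fLen_add]
  have hwx : fw x = fw g + fw u := by rw [hxg, fw_add]
  have hwy : fw y = fw g + fw v := by rw [hyg, fw_add]
  have hmin := sum_min_decomp hxg hyg hdisj
  have hwxy : fw x = fw y := w_eq hd hx hy hlen
  have hluv : fLen u = fLen v := by omega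
  have hwuv : fw u = fw v := by omega
  have hvne : fLen v ≠ 0 := by
    intro h0
    apply hne
    have hu0 : fLen u = 0 := by omega
    have : u = 0 := by
      funext i
      have := Finset.sum_eq_zero_iff.mp hu0
      exact this i (Finset.mem_univ i)
    have hv0 : v = 0 := by
      funext i
      have := Finset.sum_eq_zero_iff.mp h0
      exact this i (Finset.mem_univ i)
    rw [hxg, hyg, this, hv0]
  have hvne1 : fLen v ≠ 1 := by
    intro h1
    -- u and v are single atoms with the same weight, contradicting disjointness
    have hu1 : fLen u = 1 := by omega
    obtain ⟨i, hi⟩ := len_one hu1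
    obtain ⟨l, hl⟩ := len_one h1
    have hwui : fw u = (i : ℕ) := by rw [hi, fw_sing, mul_one]
    have hwvl : fw v = (l : ℕ) := by rw [hl, fw_sing, mul_one]
    have : i = l := Fin.ext (by omega)
    subst this
    rcases hdisj i with h' | h' <;> simp [hi, hl, sing] at h'
  unfold fDist
  rw [hmin]
  omega



/-- the step relation -/
def Rel {K : ℕ} (n : Fin K → ℕ) (m N : ℕ) (x y : Fin K → ℕ) : Prop :=
  x ∈ Facts n m ∧ y ∈ Facts n m ∧ fDist x y ≤ N

lemma rel_symm {K : ℕ} (n : Fin K → ℕ) (m N : ℕ) : Symmetric (Rel n m N) := by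
  rintro x y ⟨h1, h2, h3⟩
  exact ⟨h2, h1, by rwa [fDist_comm]⟩

lemma rtg_symm {K : ℕ} {n : Fin K → ℕ} {m N : ℕ} {x y : Fin K → ℕ}
    (h : Relation.ReflTransGen (Rel n m N) x y) :
    Relation.ReflTransGen (Rel n m N) y x :=
  haveI : Std.Symm (Rel n m N) := ⟨fun _ _ hab => rel_symm n m N hab⟩
  _root_.symm h

lemma rel_mono {K : ℕ} {n : Fin K → ℕ} {m N N' : ℕ} (h : N ≤ N') {x y : Fin K → ℕ}
    (hr : Relation.ReflTransGen (Rel n m N) x y) :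
    Relation.ReflTransGen (Rel n m N') x y := by
  have := Relation.ReflTransGen.lift (r := Rel n m N) (p := Rel n m N') id
    (fun a b ⟨h1, h2, h3⟩ => ⟨h1, h2, le_trans h3 h⟩) _ _ hr
  simpa [Function.onFun] using this

lemma rtg_connects {K : ℕ} {n : Fin K → ℕ} {m N : ℕ} {z z' : Fin K → ℕ}
    (hz : z ∈ Facts n m) (h : Relation.ReflTransGen (Rel n m N) z z') :
    Connects n m N z z' := by
  induction h with
  | refl =>
    exact ⟨0, fun _ => z, rfl, rfl, fun _ => hz, fun i => i.elim0⟩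
  | tail hab hbc ih =>
    rename_i b c
    obtain ⟨t, f, hf0, hfl, hff, hfs⟩ := ih
    refine ⟨t + 1, Fin.snoc f c, ?_, ?_, ?_, ?_⟩
    · rw [show (0 : Fin (t+2)) = Fin.castSucc 0 by simp, Fin.snoc_castSucc]
      exact hf0
    · simp [Fin.snoc_last]
    · intro i
      induction i using Fin.lastCases with
      | last => simp only [Fin.snoc_last]; exact hbc.2.1
      | cast j => rw [Fin.snoc_castSucc]; exact hff j
    · intro i
      induction i using Fin.lastCases with
      | last =>
        rw [show (Fin.last t).castSucc = Fin.castSucc (Fin.last t) from rfl,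
          Fin.snoc_castSucc, show (Fin.last t).succ = Fin.last (t+1) by
            simp [Fin.ext_iff], Fin.snoc_last, hfl]
        exact hbc.2.2
      | cast j =>
        rw [Fin.snoc_castSucc, Fin.succ_castSucc, Fin.snoc_castSucc]
        exact hfs j

lemma fin_chain_const {t : ℕ} {α : Sort*} (g : Fin (t+1) → α)
    (h : ∀ i : Fin t, g i.castSucc = g i.succ) (j : Fin (t+1)) : g j = g 0 := by
  induction j using Fin.induction with
  | zero => rfl
  | succ i ih => rw [← h i]; exact ih

/-- extract a crossing step from a chain between factorizations of different lengths -/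
lemma exists_cross {K : ℕ} {n : Fin K → ℕ} {m N : ℕ} {z z' : Fin K → ℕ}
    (h : Connects n m N z z') (hne : fLen z ≠ fLen z') :
    ∃ x y, x ∈ Facts n m ∧ y ∈ Facts n m ∧ fLen x ≠ fLen y ∧ fDist x y ≤ N := by
  obtain ⟨t, f, hf0, hfl, hff, hfs⟩ := h
  by_contra hc
  push_neg at hc
  have hall : ∀ i : Fin t, fLen (f i.castSucc) = fLen (f i.succ) := by
    intro i
    by_contra hne'
    exact absurd (hfs i) (Nat.not_le.mpr (hc _ _ (hff _) (hff _) hne'))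
  have := fin_chain_const (fun i => fLen (f i)) hall (Fin.last t)
  rw [hfl, hf0] at this
  exact hne this.symm

/-- a chain with all steps trivial has equal endpoints -/
lemma chain_const {K : ℕ} {n : Fin K → ℕ} {m N : ℕ} {z z' : Fin K → ℕ}
    (h : Connects n m N z z')
    (hstep : ∀ x y, x ∈ Facts n m → y ∈ Facts n m → fDist x y ≤ N → x = y) :
    z = z' := by
  obtain ⟨t, f, hf0, hfl, hff, hfs⟩ := h
  have hall : ∀ i : Fin t, f i.castSucc = f i.succ :=
    fun i => hstep _ _ (hff _) (hff _) (hfs i)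
  have := fin_chain_const f hall (Fin.last t)
  rw [hfl, hf0] at this
  exact this.symm

/-- distance zero implies equality -/
lemma dist_zero {K : ℕ} {x y : Fin K → ℕ} (h : fDist x y = 0) : x = y := by
  unfold fDist fLen at h
  have h1 : ∀ i, min (x i) (y i) ≤ x i := fun i => min_le_left _ _
  have h2 : ∀ i, min (x i) (y i) ≤ y i := fun i => min_le_right _ _
  have hs1 : ∑ i, min (x i) (y i) ≤ ∑ i, x i := Finset.sum_le_sum fun i _ => h1 i
  have hs2 : ∑ i, min (x i) (y i) ≤ ∑ i, y i := Finset.sum_le_sum fun i _ => h2 i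
  have hx : ∑ i, min (x i) (y i) = ∑ i, x i := by omega
  have hy : ∑ i, min (x i) (y i) = ∑ i, y i := by omega
  have hx' := (Finset.sum_eq_sum_iff_of_le (fun i _ => min_le_left (x i) (y i))).mp hx
  have hy' := (Finset.sum_eq_sum_iff_of_le (fun i _ => min_le_right (x i) (y i))).mp hy
  funext i
  have h1 := hx' i (Finset.mem_univ i)
  have h2 := hy' i (Finset.mem_univ i)
  omega


lemma sing_facts {K : ℕ} {n : Fin K → ℕ} (i : Fin K) : ∑ l, sing i 1 l * n l = n i := by
  unfold sing
  rw [Finset.sum_eq_single i (fun l _ hl => by simp [hl]) (by simp)]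
  simp

lemma add_fact {K : ℕ} {n : Fin K → ℕ} {m' : ℕ} {x : Fin K → ℕ} (i : Fin K)
    (hx : x ∈ Facts n m') : x + sing i 1 ∈ Facts n (m' + n i) := by
  unfold Facts at *
  simp only [Set.mem_setOf_eq, Pi.add_apply, Nat.add_mul, Finset.sum_add_distrib] at *
  rw [hx, sing_facts]

lemma sub_fact {K : ℕ} {n : Fin K → ℕ} {m : ℕ} {z : Fin K → ℕ} (i : Fin K)
    (hz : z ∈ Facts n m) (hi : 0 < z i) :
    n i ≤ m ∧ (fun l => z l - sing i 1 l) ∈ Facts n (m - n i) ∧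
      z = (fun l => z l - sing i 1 l) + sing i 1 := by
  unfold Facts at hz
  simp only [Set.mem_setOf_eq] at hz
  have hsle : ∀ l, sing i 1 l ≤ z l := by
    intro l; unfold sing; by_cases hl : l = i
    · subst hl; simp; omega
    · simp [hl]
  have heq : z = (fun l => z l - sing i 1 l) + sing i 1 := by
    funext l; simp only [Pi.add_apply]; have := hsle l; omega
  have hni : n i ≤ m := by
    rw [← hz]
    calc n i = z i * n i - (z i - 1) * n i := by
            rw [Nat.sub_mul]
            have : 1 * n i ≤ z i * n i := Nat.mul_le_mul_right _ hi
            omega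
      _ ≤ z i * n i := Nat.sub_le _ _
      _ ≤ ∑ l, z l * n l := Finset.single_le_sum (f := fun l => z l * n l) (fun l _ => Nat.zero_le _) (Finset.mem_univ i)
  refine ⟨hni, ?_, heq⟩
  unfold Facts
  simp only [Set.mem_setOf_eq]
  have h2 : (∑ l, (z l - sing i 1 l) * n l) + ∑ l, sing i 1 l * n l = m := by
    rw [← Finset.sum_add_distrib]
    rw [← hz]
    exact Finset.sum_congr rfl fun l _ => by
      have := hsle l
      rw [Nat.sub_mul]
      have : sing i 1 l * n l ≤ z l * n l := Nat.mul_le_mul_right _ (hsle l)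
      omega
  rw [sing_facts] at h2
  omega

lemma fDist_add_sing {K : ℕ} (x y : Fin K → ℕ) (i : Fin K) :
    fDist (x + sing i 1) (y + sing i 1) = fDist x y := by
  unfold fDist
  rw [fLen_add, fLen_add, fLen_sing]
  have h : ∀ l, min ((x + sing i 1) l) ((y + sing i 1) l) = min (x l) (y l) + sing i 1 l := by
    intro l; simp only [Pi.add_apply]; omega
  rw [Finset.sum_congr rfl (fun l _ => h l), Finset.sum_add_distrib]
  have h2 : (∑ l, sing i 1 l) = 1 := fLen_sing i 1
  rw [h2]
  omega

lemma rel_lift {K : ℕ} {n : Fin K → ℕ} {m' N : ℕ} {x y : Fin K → ℕ} (i : Fin K)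
    (h : Relation.ReflTransGen (Rel n m' N) x y) :
    Relation.ReflTransGen (Rel n (m' + n i) N) (x + sing i 1) (y + sing i 1) :=
  Relation.ReflTransGen.lift (· + sing i 1)
    (fun u v ⟨h1, h2, h3⟩ => ⟨add_fact i h1, add_fact i h2, by rwa [fDist_add_sing]⟩) _ _ h

lemma len_zero_eq {K : ℕ} {z : Fin K → ℕ} (h : fLen z = 0) : z = fun _ => 0 := by
  funext i
  exact Finset.sum_eq_zero_iff.mp h i (Finset.mem_univ i)

/-- factorizations of equal length are connected by 2-chains -/
lemma samelen_chain {a d k : ℕ} (ha : 0 < a) (hd : 0 < d) (hk : 0 < k) :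
    ∀ L m (z z' : Fin (k+1) → ℕ), z ∈ Facts (aGens a d k) m → z' ∈ Facts (aGens a d k) m →
    fLen z = L → fLen z' = L →
    Relation.ReflTransGen (Rel (aGens a d k) m 2) z z' := by
  intro L
  induction L with
  | zero =>
    intro m z z' hz hz' h h'
    rw [len_zero_eq h, len_zero_eq h']
  | succ L IH =>
    have common : ∀ m (z z' : Fin (k+1) → ℕ), z ∈ Facts (aGens a d k) m →
        z' ∈ Facts (aGens a d k) m → fLen z = L + 1 → fLen z' = L + 1 →
        (∃ i, 0 < z i ∧ 0 < z' i) →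
        Relation.ReflTransGen (Rel (aGens a d k) m 2) z z' := by
      rintro m z z' hz hz' hlz hlz' ⟨i, hi, hi'⟩
      obtain ⟨hni, hxf, hxe⟩ := sub_fact i hz hi
      obtain ⟨-, hyf, hye⟩ := sub_fact i hz' hi'
      have hlx : fLen (fun l => z l - sing i 1 l) = L := by
        have := fLen_add (fun l => z l - sing i 1 l) (sing i 1)
        rw [← hxe, fLen_sing] at this
        omega
      have hly : fLen (fun l => z' l - sing i 1 l) = L := by
        have := fLen_add (fun l => z' l - sing i 1 l) (sing i 1)
        rw [← hye, fLen_sing] at this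
        omega
      have hch := IH (m - aGens a d k i) _ _ hxf hyf hlx hly
      have := rel_lift i hch
      rw [Nat.sub_add_cancel hni] at this
      rw [← hxe, ← hye] at this
      exact this
    intro m z z' hz hz' hlz hlz'
    by_cases hzz : z = z'
    · subst hzz; exact Relation.ReflTransGen.refl
    by_cases hcom : ∃ i, 0 < z i ∧ 0 < z' i
    · exact common m z z' hz hz' hlz hlz' hcom
    push_neg at hcom
    have hdisj : ∀ i, z i = 0 ∨ z' i = 0 := by
      intro i
      rcases Nat.eq_zero_or_pos (z i) with h | h
      · exact Or.inl h
      · exact Or.inr (by have := hcom i h; omega)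
    -- the asymmetric core
    have disj : ∀ (z z' : Fin (k+1) → ℕ), z ∈ Facts (aGens a d k) m →
        z' ∈ Facts (aGens a d k) m → fLen z = L + 1 → fLen z' = L + 1 →
        (∀ i, z i = 0 ∨ z' i = 0) → z ≠ z' →
        ∀ (p j : Fin (k+1)), 0 < z p → (∀ i, 0 < z i → p ≤ i) →
          0 < z' j → (∀ i, 0 < z' i → j ≤ i) → p ≤ j →
        Relation.ReflTransGen (Rel (aGens a d k) m 2) z z' := by
      intro z z' hz hz' hlz hlz' hdisj hzz p j hp hpmin hj hjmin hpj
      have hzf := mem_facts.mp hz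
      have hz'f := mem_facts.mp hz'
      have hw : fw z = fw z' := w_eq hd hzf hz'f (by omega)
      -- L ≥ 1
      have hL1 : 1 ≤ L := by
        by_contra hL
        push_neg at hL
        interval_cases L
        obtain ⟨i0, hi0⟩ := len_one hlz
        obtain ⟨j0, hj0⟩ := len_one hlz'
        rw [hi0, hj0] at hw
        rw [fw_sing, fw_sing] at hw
        have : i0 = j0 := Fin.ext (by omega)
        subst this
        exact hzz (by rw [hi0, hj0])
      -- max of support of z
      have hpT : p ∈ Finset.univ.filter (fun i => 0 < z i) := by
        simp only [Finset.mem_filter, Finset.mem_univ, true_and]; exact hp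
      set T := Finset.univ.filter (fun i : Fin (k+1) => 0 < z i) with hT
      have hTne : T.Nonempty := ⟨p, hpT⟩
      set qm := T.max' hTne with hqm
      have hqz : 0 < z qm := by
        have := T.max'_mem hTne
        simp only [hT, Finset.mem_filter] at this
        exact this.2
      have hqmax : ∀ i, 0 < z i → i ≤ qm := by
        intro i hi
        exact Finset.le_max' T i (by simp [hT, hi])
      -- the key inequality j ≤ p + qm
      have hjle : (j:ℕ) ≤ (p:ℕ) + (qm:ℕ) := by
        by_contra hlt
        push_neg at hlt
        have h1 : fw z ≤ (qm:ℕ) * fLen z := by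
          unfold fw fLen
          rw [Finset.mul_sum]
          refine Finset.sum_le_sum fun i _ => ?_
          rcases Nat.eq_zero_or_pos (z i) with h | h
          · simp [h]
          · exact Nat.mul_le_mul_right _ (hqmax i h)
        have h2 : (j:ℕ) * fLen z' ≤ fw z' := by
          unfold fw fLen
          rw [Finset.mul_sum]
          refine Finset.sum_le_sum fun i _ => ?_
          rcases Nat.eq_zero_or_pos (z' i) with h | h
          · simp [h]
          · exact Nat.mul_le_mul_right _ (hjmin i h)
        have h3 : (qm:ℕ) < (j:ℕ) := by omega
        have h4 : (qm:ℕ) * fLen z < (j:ℕ) * fLen z' := by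
          rw [hlz, hlz']
          exact (Nat.mul_lt_mul_right (by omega)).mpr h3
        omega
      -- indices for the trade
      have hrlt : (p:ℕ) + (qm:ℕ) - (j:ℕ) < k + 1 := by
        have := qm.isLt
        omega
      set rr : Fin (k+1) := ⟨(p:ℕ) + (qm:ℕ) - (j:ℕ), hrlt⟩ with hrr
      set s : Fin (k+1) → ℕ := fun l => sing p 1 l + sing qm 1 l with hs
      have hsl_eq : ∀ l, s l = (if l = p then 1 else 0) + (if l = qm then 1 else 0) := by
        intro l; simp only [hs, sing]
      have h2pq : p = qm → 2 ≤ z p := by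
        intro hpq
        have hsupp : ∀ i, 0 < z i → i = p := fun i hi =>
          le_antisymm (by rw [hpq]; exact hqmax i hi) (hpmin i hi)
        have hflen : fLen z = z p := by
          unfold fLen
          exact Finset.sum_eq_single p (fun i _ hil => by
            rcases Nat.eq_zero_or_pos (z i) with h | h
            · exact h
            · exact absurd (hsupp i h) hil) (fun h => absurd (Finset.mem_univ p) h)
        omega
      have hsle : ∀ l, s l ≤ z l := by
        intro l
        rw [hsl_eq]
        by_cases hl1 : l = p
        · subst hl1
          by_cases hl2 : l = qm
          · rw [if_pos rfl, if_pos hl2]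
            have := h2pq hl2
            omega
          · rw [if_pos rfl, if_neg hl2]
            omega
        · by_cases hl2 : l = qm
          · subst hl2
            rw [if_neg hl1, if_pos rfl]
            omega
          · rw [if_neg hl1, if_neg hl2]
            omega
      set w : Fin (k+1) → ℕ := fun l => (z l - s l) + (sing j 1 l + sing rr 1 l) with hwdef
      have hw_eq : ∀ l, w l = (z l - s l) + (sing j 1 l + sing rr 1 l) := by
        intro l; rw [hwdef]
      have hsums : ∑ l, s l = 2 := by
        have e0 : ∑ l, s l = (∑ l, sing p 1 l) + ∑ l, sing qm 1 l := by
          rw [← Finset.sum_add_distrib]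
        have e1 : ∑ l, sing p 1 l = 1 := fLen_sing p 1
        have e2 : ∑ l, sing qm 1 l = 1 := fLen_sing qm 1
        omega
      have hsumzs : ∑ l, (z l - s l) = L + 1 - 2 := by
        rw [sum_sub _ _ hsle, hsums]
        have : ∑ l, z l = L + 1 := hlz
        omega
      have hwlen : fLen w = L + 1 := by
        have e0 : fLen w = (∑ l, (z l - s l)) + ((∑ l, sing j 1 l) + ∑ l, sing rr 1 l) := by
          unfold fLen
          rw [← Finset.sum_add_distrib, ← Finset.sum_add_distrib]
        have e1 : ∑ l, sing j 1 l = 1 := fLen_sing j 1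
        have e2 : ∑ l, sing rr 1 l = 1 := fLen_sing rr 1
        omega
      have hsw : ∑ l : Fin (k+1), (l:ℕ) * s l = (p:ℕ) + (qm:ℕ) := by
        have e0 : ∑ l : Fin (k+1), (l:ℕ) * s l = (∑ l : Fin (k+1), (l:ℕ) * sing p 1 l) + ∑ l : Fin (k+1), (l:ℕ) * sing qm 1 l := by
          rw [← Finset.sum_add_distrib]
          exact Finset.sum_congr rfl fun l _ => by simp only [hs]; ring
        have e1 : ∑ l : Fin (k+1), (l:ℕ) * sing p 1 l = (p:ℕ) * 1 := fw_sing p 1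
        have e2 : ∑ l : Fin (k+1), (l:ℕ) * sing qm 1 l = (qm:ℕ) * 1 := fw_sing qm 1
        omega
      have hswle : ∑ l : Fin (k+1), (l:ℕ) * s l ≤ fw z := by
        unfold fw
        exact Finset.sum_le_sum fun l _ => Nat.mul_le_mul_left _ (hsle l)
      have hwzs : ∑ l : Fin (k+1), (l:ℕ) * (z l - s l) = fw z - ((p:ℕ) + (qm:ℕ)) := by
        have e0 : ∀ l : Fin (k+1), (l:ℕ) * (z l - s l) = (l:ℕ) * z l - (l:ℕ) * s l :=
          fun l => Nat.mul_sub _ _ _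
        rw [Finset.sum_congr rfl (fun l _ => e0 l),
          sum_sub _ _ (fun l => Nat.mul_le_mul_left _ (hsle l)), hsw]
        rfl
      have hww : fw w = fw z := by
        have e0 : fw w = (∑ l : Fin (k+1), (l:ℕ) * (z l - s l)) +
            ((∑ l : Fin (k+1), (l:ℕ) * sing j 1 l) + ∑ l : Fin (k+1), (l:ℕ) * sing rr 1 l) := by
          unfold fw
          rw [← Finset.sum_add_distrib, ← Finset.sum_add_distrib]
          exact Finset.sum_congr rfl fun l _ => by simp only [hw_eq]; ring
        have e1 : ∑ l : Fin (k+1), (l:ℕ) * sing j 1 l = (j:ℕ) * 1 := fw_sing j 1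
        have e2 : ∑ l : Fin (k+1), (l:ℕ) * sing rr 1 l = (rr:ℕ) * 1 := fw_sing rr 1
        have e3 : (rr:ℕ) = (p:ℕ) + (qm:ℕ) - (j:ℕ) := rfl
        rw [hsw] at hswle
        omega
      have hwf : w ∈ Facts (aGens a d k) m := by
        rw [mem_facts, hwlen, hww]
        rw [hlz] at hzf
        omega
      have hdistzw : fDist z w ≤ 2 := by
        unfold fDist
        have hminlb : ∀ l, z l - s l ≤ min (z l) (w l) := by
          intro l
          rw [hw_eq]
          have := hsle l
          omega
        have hmm := Finset.sum_le_sum (s := Finset.univ) fun l (_ : l ∈ Finset.univ) => hminlb l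
        rw [hsumzs] at hmm
        rw [hlz, hwlen]
        omega
      have hwj : 0 < w j := by
        have hzj : z j = 0 := by
          rcases hdisj j with h | h
          · exact h
          · omega
        have e : w j = (z j - s j) + (1 + sing rr 1 j) := by
          rw [hw_eq]
          congr 1
          simp [sing]
        omega
      have hstep : Rel (aGens a d k) m 2 z w := ⟨hz, hwf, hdistzw⟩
      have hrest := common m w z' hwf hz' hwlen hlz' ⟨j, hwj, hj⟩
      exact Relation.ReflTransGen.head hstep hrest
    -- pick minimal supports
    have hzne : 0 < fLen z := by omega
    have hz'ne : 0 < fLen z' := by omega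
    obtain ⟨p, hp, hpmin⟩ : ∃ p, 0 < z p ∧ ∀ i, 0 < z i → p ≤ i := by
      have hne : (Finset.univ.filter (fun i : Fin (k+1) => 0 < z i)).Nonempty := by
        by_contra h
        rw [Finset.not_nonempty_iff_eq_empty, Finset.filter_eq_empty_iff] at h
        have : fLen z = 0 := Finset.sum_eq_zero fun i _ => by
          have := h (Finset.mem_univ i); omega
        omega
      set p := (Finset.univ.filter (fun i : Fin (k+1) => 0 < z i)).min' hne
      have h1 := (Finset.univ.filter (fun i : Fin (k+1) => 0 < z i)).min'_mem hne
      simp only [Finset.mem_filter] at h1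
      exact ⟨p, h1.2, fun i hi => Finset.min'_le _ i (by simp [hi])⟩
    obtain ⟨j, hj, hjmin⟩ : ∃ j, 0 < z' j ∧ ∀ i, 0 < z' i → j ≤ i := by
      have hne : (Finset.univ.filter (fun i : Fin (k+1) => 0 < z' i)).Nonempty := by
        by_contra h
        rw [Finset.not_nonempty_iff_eq_empty, Finset.filter_eq_empty_iff] at h
        have : fLen z' = 0 := Finset.sum_eq_zero fun i _ => by
          have := h (Finset.mem_univ i); omega
        omega
      set j := (Finset.univ.filter (fun i : Fin (k+1) => 0 < z' i)).min' hne
      have h1 := (Finset.univ.filter (fun i : Fin (k+1) => 0 < z' i)).min'_mem hne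
      simp only [Finset.mem_filter] at h1
      exact ⟨j, h1.2, fun i hi => Finset.min'_le _ i (by simp [hi])⟩
    rcases le_total p j with hle | hle
    · exact disj z z' hz hz' hlz hlz' hdisj hzz p j hp hpmin hj hjmin hle
    · refine rtg_symm (disj z' z hz' hz hlz' hlz ?_ (Ne.symm hzz) j p hj hjmin hp hpmin hle)
      intro i
      rcases hdisj i with h | h
      · exact Or.inr h
      · exact Or.inl h


/-- Lemma B : if there is a longer factorization, then length `fLen z + d` occurs -/
lemma exists_len_succ {a d k m : ℕ} (ha : 0 < a) (hd : 0 < d) (hk : 0 < k)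
    (hgcd : Nat.gcd a d = 1) {z z' : Fin (k+1) → ℕ}
    (hz : z ∈ Facts (aGens a d k) m) (hz' : z' ∈ Facts (aGens a d k) m)
    (h : fLen z < fLen z') :
    ∃ y ∈ Facts (aGens a d k) m, fLen y = fLen z + d := by
  have hzf := mem_facts.mp hz
  have hz'f := mem_facts.mp hz'
  obtain ⟨j, hj0, hjl, hjw⟩ := len_rel hd hgcd hzf hz'f h
  have hwa : a ≤ fw z := by
    have : a * 1 ≤ a * j := Nat.mul_le_mul_left a hj0
    omega
  have hwle : fw z ≤ k * fLen z := fw_le z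
  have hmul : k * (fLen z + d) = k * fLen z + k * d := Nat.mul_add _ _ _
  refine ⟨greedy k (fLen z + d) (fw z - a), ?_, ?_⟩
  · refine greedy_facts hk (by omega : fw z - a ≤ k * (fLen z + d)) ?_
    have : (fLen z + d) * a + (fw z - a) * d = fLen z * a + fw z * d := by
      zify [hwa]
      ring
    rw [this, hzf]
  · exact greedy_len hk (by omega)

/-- Lemma C : an adjacent pair of factorizations at distance ≤ q + d -/
lemma adjacent_pair {a d k m : ℕ} (ha : 0 < a) (hd : 0 < d) (hk : 0 < k)
    (hgcd : Nat.gcd a d = 1) {z z'' : Fin (k+1) → ℕ}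
    (hz : z ∈ Facts (aGens a d k) m) (hz'' : z'' ∈ Facts (aGens a d k) m)
    (hlen : fLen z'' = fLen z + d) :
    ∃ x ∈ Facts (aGens a d k) m, ∃ y ∈ Facts (aGens a d k) m,
      fLen x = fLen z ∧ fLen y = fLen z + d ∧ fDist x y ≤ (a + k - 1) / k + d := by
  have hzf := mem_facts.mp hz
  have hz''f := mem_facts.mp hz''
  set L := fLen z with hL
  set S := fw z with hS
  set q := (a + k - 1) / k with hq
  have hq1 : a ≤ k * q := ceil_ge hk
  have hq2 : k * q < a + k := ceil_lt hk ha
  -- S ≥ a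
  obtain ⟨j, hj0, hjl, hjw⟩ := len_rel hd hgcd hzf hz''f (by omega)
  have hSa : a ≤ S := by
    have : a * 1 ≤ a * j := Nat.mul_le_mul_left a hj0
    omega
  have hSk : S ≤ k * L := fw_le z
  have hqL : q ≤ L := ceil_le hk (by omega)
  -- the transferred weight
  set W := max a (S - k * (L - q)) with hW
  have hkLq : k * (L - q) + k * q = k * L := by
    rw [← Nat.mul_add]
    congr 1
    omega
  have hWa : a ≤ W := le_max_left _ _
  have hWkq : W ≤ k * q := by
    apply max_le hq1
    omega
  have hWS : W ≤ S := max_le hSa (Nat.sub_le _ _)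
  have hSW : S - W ≤ k * (L - q) := by
    have h1 : S - k * (L - q) ≤ W := le_max_right _ _
    omega
  -- the two pieces
  set A := greedy k q W with hA
  set B := greedy k (L - q) (S - W) with hB
  have hAlen : fLen A = q := greedy_len hk hWkq
  have hAw : fw A = W := greedy_w hk hWkq
  have hBlen : fLen B = L - q := greedy_len hk hSW
  have hBw : fw B = S - W := greedy_w hk hSW
  have hWak : W - a < k + 1 := by omega
  set rr : Fin (k+1) := ⟨W - a, hWak⟩ with hrr
  set C := fun l => sing rr 1 l + sing (0 : Fin (k+1)) (q + d - 1) l with hC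
  have hClen : fLen C = q + d := by
    have e0 : fLen C = (∑ l, sing rr 1 l) + ∑ l, sing (0 : Fin (k+1)) (q + d - 1) l := by
      unfold fLen
      rw [← Finset.sum_add_distrib]
    have e1 : ∑ l, sing rr 1 l = 1 := fLen_sing rr 1
    have e2 : ∑ l, sing (0 : Fin (k+1)) (q + d - 1) l = q + d - 1 :=
      fLen_sing (0 : Fin (k+1)) (q + d - 1)
    have hqpos : 0 < q := ceil_pos hk ha
    omega
  have hCw : fw C = W - a := by
    have e0 : fw C = (∑ l : Fin (k+1), (l:ℕ) * sing rr 1 l) +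
        ∑ l : Fin (k+1), (l:ℕ) * sing (0 : Fin (k+1)) (q + d - 1) l := by
      unfold fw
      rw [← Finset.sum_add_distrib]
      exact Finset.sum_congr rfl fun l _ => by simp only [hC]; ring
    have e1 : ∑ l : Fin (k+1), (l:ℕ) * sing rr 1 l = (rr:ℕ) * 1 := fw_sing rr 1
    have e2 : ∑ l : Fin (k+1), (l:ℕ) * sing (0 : Fin (k+1)) (q + d - 1) l
        = ((0 : Fin (k+1)):ℕ) * (q + d - 1) := fw_sing (0 : Fin (k+1)) (q + d - 1)
    have e3 : (rr:ℕ) = W - a := rfl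
    simp only [Fin.val_zero, Nat.zero_mul] at e2
    omega
  set x := fun l => A l + B l with hx
  set y := fun l => B l + C l with hy
  have hxlen : fLen x = L := by
    have : fLen x = fLen A + fLen B := by
      unfold fLen
      rw [← Finset.sum_add_distrib]
    omega
  have hxw : fw x = S := by
    have : fw x = fw A + fw B := by
      unfold fw
      rw [← Finset.sum_add_distrib]
      exact Finset.sum_congr rfl fun l _ => by simp only [hx]; ring
    omega
  have hylen : fLen y = L + d := by
    have : fLen y = fLen B + fLen C := by
      unfold fLen
      rw [← Finset.sum_add_distrib]
    omega
  have hyw : fw y = S - a := by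
    have : fw y = fw B + fw C := by
      unfold fw
      rw [← Finset.sum_add_distrib]
      exact Finset.sum_congr rfl fun l _ => by simp only [hy]; ring
    omega
  have hxf : x ∈ Facts (aGens a d k) m := by
    rw [mem_facts, hxlen, hxw]
    exact hzf
  have hyf : y ∈ Facts (aGens a d k) m := by
    rw [mem_facts, hylen, hyw]
    have : (L + d) * a + (S - a) * d = L * a + S * d := by
      zify [hSa]
      ring
    rw [this]
    exact hzf
  refine ⟨x, hxf, y, hyf, hxlen, hylen, ?_⟩
  unfold fDist
  have hminlb : ∀ l, B l ≤ min (x l) (y l) := by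
    intro l
    simp only [hx, hy]
    omega
  have hmm := Finset.sum_le_sum (s := Finset.univ) fun l (_ : l ∈ Finset.univ) => hminlb l
  have hBsum : ∑ l, B l = L - q := hBlen
  rw [hBsum] at hmm
  rw [hxlen, hylen]
  omega


/-- every two factorizations are connected by a (q+d)-chain -/
lemma chain_upper {a d k : ℕ} (ha : 0 < a) (hd : 0 < d) (hk : 0 < k)
    (hgcd : Nat.gcd a d = 1) :
    ∀ m (z z' : Fin (k+1) → ℕ), z ∈ Facts (aGens a d k) m → z' ∈ Facts (aGens a d k) m →
    Relation.ReflTransGen (Rel (aGens a d k) m ((a + k - 1) / k + d)) z z' := by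
  have h2q : 2 ≤ (a + k - 1) / k + d := by
    have := ceil_pos (a := a) hk ha
    omega
  have key : ∀ c m (z z' : Fin (k+1) → ℕ), z ∈ Facts (aGens a d k) m →
      z' ∈ Facts (aGens a d k) m → fLen z ≤ fLen z' → fLen z' - fLen z = c →
      Relation.ReflTransGen (Rel (aGens a d k) m ((a + k - 1) / k + d)) z z' := by
    intro c
    induction c using Nat.strong_induction_on with
    | _ c IHc =>
    intro m z z' hz hz' hle hc
    rcases Nat.eq_or_lt_of_le hle with heq | hlt
    · exact rel_mono h2q (samelen_chain ha hd hk (fLen z) m z z' hz hz' rfl heq.symm)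
    · obtain ⟨y0, hy0, hy0l⟩ := exists_len_succ ha hd hk hgcd hz hz' hlt
      obtain ⟨x, hxf, y, hyf, hxl, hyl, hxy⟩ := adjacent_pair ha hd hk hgcd hz hy0 hy0l
      have h1 : Relation.ReflTransGen (Rel (aGens a d k) m ((a + k - 1) / k + d)) z x :=
        rel_mono h2q (samelen_chain ha hd hk (fLen z) m z x hz hxf rfl hxl)
      have hstep : Rel (aGens a d k) m ((a + k - 1) / k + d) x y := ⟨hxf, hyf, hxy⟩
      have hdle : fLen y ≤ fLen z' := by
        obtain ⟨j, hj0, hjl, hjw⟩ := len_rel hd hgcd (mem_facts.mp hz) (mem_facts.mp hz') hlt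
        have : d * 1 ≤ d * j := Nat.mul_le_mul_left d hj0
        omega
      have h2 : Relation.ReflTransGen (Rel (aGens a d k) m ((a + k - 1) / k + d)) y z' :=
        IHc (fLen z' - fLen y) (by omega) m y z' hyf hz' hdle rfl
      exact (h1.tail hstep).trans h2
  intro m z z' hz hz'
  rcases le_total (fLen z) (fLen z') with hle | hle
  · exact key _ m z z' hz hz' hle rfl
  · exact rtg_symm (key _ m z' z hz' hz hle rfl)


/-- distinct factorizations have distance ≥ 2 -/
lemma dist_ge_two {a d k m : ℕ} (ha : 0 < a) (hd : 0 < d) (hk : 0 < k)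
    (hgcd : Nat.gcd a d = 1)
    {x y : Fin (k+1) → ℕ} (hx : x ∈ Facts (aGens a d k) m) (hy : y ∈ Facts (aGens a d k) m)
    (hne : x ≠ y) : 2 ≤ fDist x y := by
  have h2q : 2 ≤ (a + k - 1) / k + d := by
    have := ceil_pos (a := a) hk ha
    omega
  rcases lt_trichotomy (fLen x) (fLen y) with h | h | h
  · exact le_trans h2q (dist_lower_ne ha hd hk hgcd hx hy h)
  · exact dist_lower_eq hd hx hy h hne
  · rw [fDist_comm]
    exact le_trans h2q (dist_lower_ne ha hd hk hgcd hy hx h)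

end ANM

/-- In an arithmetic numerical monoid, every element `m` with
`c(m) ∉ {0,2}` satisfies `c_adj(m) = c(m) = c(M)`. -/
theorem arithmetic_adjacent_eq_catenary (a d k : ℕ) (ha : 0 < a) (hd : 0 < d)
    (hk : 0 < k) (hgcd : Nat.gcd a d = 1) (hka : k < a)
    (m : ℕ) (hm : (Facts (aGens a d k) m).Nonempty)
    (h0 : catDeg (aGens a d k) m ≠ 0) (h2 : catDeg (aGens a d k) m ≠ 2) :
    catAdj (aGens a d k) m = catDeg (aGens a d k) m ∧
    catDeg (aGens a d k) m = catDegM (aGens a d k) := by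
  set n := aGens a d k with hn
  set Q := (a + k - 1) / k + d with hQdef
  -- Q is an upper bound for chains, for every element
  have hQmem : ∀ m', Q ∈ {N | ∀ z ∈ Facts n m', ∀ z' ∈ Facts n m', Connects n m' N z z'} := by
    intro m' z hz z' hz'
    exact ANM.rtg_connects hz (ANM.chain_upper ha hd hk hgcd m' z z' hz hz')
  have hdeg_le : ∀ m', catDeg n m' ≤ Q := fun m' => Nat.sInf_le (hQmem m')
  -- existence of two factorizations of different length
  have hexist2 : ∃ z ∈ Facts n m, ∃ z' ∈ Facts n m, fLen z < fLen z' := by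
    by_contra hcon
    push_neg at hcon
    have hsame : ∀ z ∈ Facts n m, ∀ z' ∈ Facts n m, fLen z = fLen z' := by
      intro z hz z' hz'
      have h1 := hcon z hz z' hz'
      have h2' := hcon z' hz' z hz
      omega
    have h2mem : (2 : ℕ) ∈ {N | ∀ z ∈ Facts n m, ∀ z' ∈ Facts n m, Connects n m N z z'} := by
      intro z hz z' hz'
      exact ANM.rtg_connects hz
        (ANM.samelen_chain ha hd hk (fLen z) m z z' hz hz' rfl (hsame z' hz' z hz))
    have hle2 : catDeg n m ≤ 2 := Nat.sInf_le h2mem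
    have hmemc : catDeg n m ∈ {N | ∀ z ∈ Facts n m, ∀ z' ∈ Facts n m, Connects n m N z z'} :=
      Nat.sInf_mem (⟨2, h2mem⟩ : Set.Nonempty _)
    have hne1 : catDeg n m ≠ 1 := by
      intro h1
      rw [h1] at hmemc
      have hall : ∀ z ∈ Facts n m, ∀ z' ∈ Facts n m, z = z' := by
        intro z hz z' hz'
        refine ANM.chain_const (hmemc z hz z' hz') ?_
        intro x y hxf hyf hdist
        by_contra hne
        have := ANM.dist_ge_two ha hd hk hgcd hxf hyf hne
        omega
      have h0mem : (0 : ℕ) ∈ {N | ∀ z ∈ Facts n m, ∀ z' ∈ Facts n m, Connects n m N z z'} := by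
        intro z hz z' hz'
        have : z = z' := hall z hz z' hz'
        subst this
        exact ⟨0, fun _ => z, rfl, rfl, fun _ => hz, fun i => i.elim0⟩
      have hle0 : catDeg n m ≤ 0 := Nat.sInf_le h0mem
      omega
    have hcase : catDeg n m = 0 ∨ catDeg n m = 2 := by omega
    rcases hcase with hc | hc
    · exact h0 hc
    · exact h2 hc
  obtain ⟨z1, hz1, z2, hz2, hlt⟩ := hexist2
  -- the catenary degree equals Q
  have hdeg_ge : Q ≤ catDeg n m := by
    have hmemc : catDeg n m ∈ {N | ∀ z ∈ Facts n m, ∀ z' ∈ Facts n m, Connects n m N z z'} :=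
      Nat.sInf_mem (s := {N | ∀ z ∈ Facts n m, ∀ z' ∈ Facts n m, Connects n m N z z'}) ⟨Q, hQmem m⟩
    obtain ⟨x, y, hxf, hyf, hne, hdist⟩ :=
      ANM.exists_cross (hmemc z1 hz1 z2 hz2) (by omega : fLen z1 ≠ fLen z2)
    rcases Nat.lt_or_ge (fLen x) (fLen y) with h | h
    · exact le_trans (ANM.dist_lower_ne ha hd hk hgcd hxf hyf h) hdist
    · have h' : fLen y < fLen x := by omega
      rw [ANM.fDist_comm] at hdist
      exact le_trans (ANM.dist_lower_ne ha hd hk hgcd hyf hxf h') hdist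
  have hdeg : catDeg n m = Q := le_antisymm (hdeg_le m) hdeg_ge
  -- lengths L, L+d adjacent
  obtain ⟨y1, hy1, hy1l⟩ := ANM.exists_len_succ ha hd hk hgcd hz1 hz2 hlt
  have hbetween : ∀ l ∈ LSet n m, fLen z1 < l → fLen z1 + d ≤ l := by
    rintro l ⟨w, hwF, hwl⟩ hl1
    obtain ⟨j, hj0, hjl, hjw⟩ := ANM.len_rel hd hgcd (ANM.mem_facts.mp hz1)
      (ANM.mem_facts.mp hwF) (by omega)
    have : d * 1 ≤ d * j := Nat.mul_le_mul_left d hj0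
    omega
  have hadj : AdjLen n m (fLen z1) (fLen z1 + d) := by
    refine ⟨⟨z1, hz1, rfl⟩, ⟨y1, hy1, hy1l⟩, by omega, ?_⟩
    intro l hl hl1 hl2
    rcases Nat.eq_or_lt_of_le hl1 with heq | hlt'
    · exact Or.inl heq.symm
    · exact Or.inr (le_antisymm hl2 (hbetween l hl hlt'))
  -- the adjacent catenary degree equals Q
  have hQadjmem : Q ∈ {N | ∀ α β : ℕ, AdjLen n m α β →
      ∃ z ∈ Facts n m, ∃ z' ∈ Facts n m, fLen z = α ∧ fLen z' = β ∧ fDist z z' ≤ N} := by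
    rintro α β ⟨⟨zα, hzαF, hzαl⟩, ⟨zβ, hzβF, hzβl⟩, hαβ, hbetw⟩
    obtain ⟨yy, hyyF, hyyl⟩ := ANM.exists_len_succ ha hd hk hgcd hzαF hzβF (by omega)
    have hβeq : β = α + d := by
      obtain ⟨j, hj0, hjl, hjw⟩ := ANM.len_rel hd hgcd (ANM.mem_facts.mp hzαF)
        (ANM.mem_facts.mp hzβF) (by omega)
      have hdj : d * 1 ≤ d * j := Nat.mul_le_mul_left d hj0
      have := hbetw (α + d) ⟨yy, hyyF, by omega⟩ (by omega) (by omega)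
      omega
    obtain ⟨x, hxf, y, hyf, hxl, hyl, hdist⟩ :=
      ANM.adjacent_pair ha hd hk hgcd hzαF hyyF (by omega)
    exact ⟨x, hxf, y, hyf, by omega, by omega, hdist⟩
  have hadj_ge : ∀ N ∈ {N | ∀ α β : ℕ, AdjLen n m α β →
      ∃ z ∈ Facts n m, ∃ z' ∈ Facts n m, fLen z = α ∧ fLen z' = β ∧ fDist z z' ≤ N},
      Q ≤ N := by
    intro N hN
    obtain ⟨x, hxf, y, hyf, hxl, hyl, hdist⟩ := hN _ _ hadj
    have hxy : fLen x < fLen y := by omega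
    exact le_trans (ANM.dist_lower_ne ha hd hk hgcd hxf hyf hxy) hdist
  have hadj_eq : catAdj n m = Q :=
    le_antisymm (Nat.sInf_le hQadjmem) (le_csInf ⟨Q, hQadjmem⟩ hadj_ge)
  -- the set-wise catenary degree
  have hM : catDegM n = Q := by
    unfold catDegM
    have hne : (catDeg n '' {m' | (Facts n m').Nonempty}).Nonempty :=
      ⟨catDeg n m, ⟨m, hm, rfl⟩⟩
    have hbdd : BddAbove (catDeg n '' {m' | (Facts n m').Nonempty}) := by
      refine ⟨Q, ?_⟩
      rintro x ⟨m', -, rfl⟩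
      exact hdeg_le m'
    apply le_antisymm
    · apply csSup_le hne
      rintro x ⟨m', -, rfl⟩
      exact hdeg_le m'
    · rw [← hdeg]
      exact le_csSup hbdd ⟨m, hm, rfl⟩
  exact ⟨by rw [hadj_eq, hdeg], by rw [hdeg, hM]⟩
end

section
/- Let M = ⟨a, a+d, …, a+kd⟩ be an arithmetic numerical monoid and m ∈ M. If c(m) = 0 or c(m) = 2, then c_mon(m) = c(m). -/
section Aux

open Finset

lemma expand_sum (a d k : ℕ) (w : Fin (k+1) → ℕ) :
    ∑ i, w i * aGens a d k i = (∑ i, w i) * a + (∑ i : Fin (k+1), (i : ℕ) * w i) * d := by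
  unfold aGens
  rw [Finset.sum_mul, Finset.sum_mul, ← Finset.sum_add_distrib]
  exact Finset.sum_congr rfl fun i _ => by ring

lemma step_aux (a d k : ℕ) (ha : 0 < a) (hgcd : Nat.gcd a d = 1) (hka : k < a)
    (m : ℕ) (z z' : Fin (k+1) → ℕ)
    (hz : z ∈ Facts (aGens a d k) m) (hz' : z' ∈ Facts (aGens a d k) m)
    (hdist : fDist z z' ≤ 2) (hlt : fLen z < fLen z') : False := by
  set n := aGens a d k with hn
  set g : Fin (k+1) → ℕ := fun i => min (z i) (z' i) with hg
  set u : Fin (k+1) → ℕ := fun i => z i - g i with hu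
  set v : Fin (k+1) → ℕ := fun i => z' i - g i with hv
  have hgz : ∀ i, g i ≤ z i := fun i => min_le_left _ _
  have hgz' : ∀ i, g i ≤ z' i := fun i => min_le_right _ _
  -- sums of products split
  have hsz : ∑ i, u i * n i + ∑ i, g i * n i = ∑ i, z i * n i := by
    rw [← Finset.sum_add_distrib]
    exact Finset.sum_congr rfl fun i _ => by
      have := hgz i
      simp only [hu]
      rw [← add_mul, Nat.sub_add_cancel this]
  have hsz' : ∑ i, v i * n i + ∑ i, g i * n i = ∑ i, z' i * n i := by
    rw [← Finset.sum_add_distrib]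
    exact Finset.sum_congr rfl fun i _ => by
      have := hgz' i
      simp only [hv]
      rw [← add_mul, Nat.sub_add_cancel this]
  have hlz : ∑ i, u i + ∑ i, g i = fLen z := by
    unfold fLen
    rw [← Finset.sum_add_distrib]
    exact Finset.sum_congr rfl fun i _ => Nat.sub_add_cancel (hgz i)
  have hlz' : ∑ i, v i + ∑ i, g i = fLen z' := by
    unfold fLen
    rw [← Finset.sum_add_distrib]
    exact Finset.sum_congr rfl fun i _ => Nat.sub_add_cancel (hgz' i)
  have hzz : ∑ i, z i * n i = m := hz
  have hzz' : ∑ i, z' i * n i = m := hz'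
  have key : ∑ i, u i * n i = ∑ i, v i * n i := by omega
  have hdist' : fLen z' - ∑ i, g i ≤ 2 := by
    have : fDist z z' = max (fLen z) (fLen z') - ∑ i, g i := rfl
    rw [this] at hdist
    omega
  set Lu := ∑ i, u i with hLu
  set Lv := ∑ i, v i with hLv
  have hLuLv : Lu < Lv := by omega
  have hLv2 : Lv ≤ 2 := by omega
  set p := ∑ i : Fin (k+1), (i : ℕ) * u i with hp
  set q := ∑ i : Fin (k+1), (i : ℕ) * v i with hq
  have heq : Lu * a + p * d = Lv * a + q * d := by
    have e1 := expand_sum a d k u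
    have e2 := expand_sum a d k v
    rw [← hn] at e1 e2
    rw [← hLu, ← hp] at e1
    rw [← hLv, ← hq] at e2
    omega
  have hpk : p ≤ k * Lu := by
    rw [hp, hLu, Finset.mul_sum]
    exact Finset.sum_le_sum fun i _ => Nat.mul_le_mul_right _ (Fin.is_le i)
  have hcase : Lu = 0 ∨ (Lu = 1 ∧ Lv = 2) := by omega
  rcases hcase with h0 | ⟨h1, h2⟩
  · have hp0 : p = 0 := by
      have := hpk; rw [h0] at this; omega
    rw [h0, hp0] at heq
    have : Lv = 1 ∨ Lv = 2 := by omega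
    rcases this with h | h <;> rw [h] at heq <;> omega
  · rw [h1, h2] at heq
    have ha_eq : a = (p - q) * d := by rw [Nat.sub_mul]; omega
    have hdvd : d ∣ a := ⟨p - q, by rw [ha_eq, mul_comm]⟩
    have hd1 : d = 1 := Nat.eq_one_of_dvd_one (hgcd ▸ Nat.dvd_gcd hdvd dvd_rfl)
    rw [hd1] at ha_eq
    rw [h1] at hpk
    omega

lemma step_len (a d k : ℕ) (ha : 0 < a) (hgcd : Nat.gcd a d = 1) (hka : k < a)
    (m : ℕ) (z z' : Fin (k+1) → ℕ)
    (hz : z ∈ Facts (aGens a d k) m) (hz' : z' ∈ Facts (aGens a d k) m)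
    (hdist : fDist z z' ≤ 2) : fLen z = fLen z' := by
  have hcomm : fDist z' z ≤ 2 := by
    have : fDist z' z = fDist z z' := by
      unfold fDist
      rw [max_comm]
      congr 1
      exact Finset.sum_congr rfl fun i _ => min_comm _ _
    rw [this]; exact hdist
  rcases Nat.lt_trichotomy (fLen z) (fLen z') with h | h | h
  · exact absurd h (fun h => step_aux a d k ha hgcd hka m z z' hz hz' hdist h)
  · exact h
  · exact absurd h (fun h => step_aux a d k ha hgcd hka m z' z hz' hz hcomm h)

lemma chain_len (a d k : ℕ) (ha : 0 < a) (hgcd : Nat.gcd a d = 1) (hka : k < a)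
    (m t N : ℕ) (hN : N ≤ 2) (f : Fin (t+1) → Fin (k+1) → ℕ)
    (hf : ∀ i, f i ∈ Facts (aGens a d k) m)
    (hstep : ∀ i : Fin t, fDist (f i.castSucc) (f i.succ) ≤ N) :
    ∀ i, fLen (f i) = fLen (f 0) := by
  intro ⟨j, hj⟩
  induction j with
  | zero =>
    congr 1
  | succ j ih =>
    have hj' : j < t := by omega
    have hprev := ih (by omega)
    have hs := hstep ⟨j, hj'⟩
    have : fLen (f (Fin.castSucc ⟨j, hj'⟩)) = fLen (f (Fin.succ ⟨j, hj'⟩)) :=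
      step_len a d k ha hgcd hka m _ _ (hf _) (hf _) (le_trans hs hN)
    have hc : (Fin.castSucc ⟨j, hj'⟩ : Fin (t+1)) = ⟨j, by omega⟩ := rfl
    have hsu : (Fin.succ ⟨j, hj'⟩ : Fin (t+1)) = ⟨j+1, hj⟩ := rfl
    rw [hc, hsu] at this
    rw [← this]
    exact hprev

lemma len_le_m (a d k : ℕ) (ha : 0 < a) (m : ℕ) (z : Fin (k+1) → ℕ)
    (hz : z ∈ Facts (aGens a d k) m) : fLen z ≤ m := by
  have hzz : ∑ i, z i * aGens a d k i = m := hz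
  rw [← hzz]
  unfold fLen
  exact Finset.sum_le_sum fun i _ =>
    Nat.le_mul_of_pos_right _ (by unfold aGens; omega)

end Aux

/-- In an arithmetic numerical monoid, if `c(m) = 0` or
`c(m) = 2` then `c_mon(m) = c(m)`. -/
theorem arithmetic_small_catenary_monotone (a d k : ℕ) (ha : 0 < a) (hd : 0 < d)
    (hk : 0 < k) (hgcd : Nat.gcd a d = 1) (hka : k < a)
    (m : ℕ) (hm : (Facts (aGens a d k) m).Nonempty)
    (h : catDeg (aGens a d k) m = 0 ∨ catDeg (aGens a d k) m = 2) :
    catMon (aGens a d k) m = catDeg (aGens a d k) m := by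
  set n := aGens a d k with hn
  have hc2 : catDeg n m ≤ 2 := by rcases h with h | h <;> omega
  -- the defining set for catDeg is nonempty: m works
  have hmemm : m ∈ {N | ∀ z ∈ Facts n m, ∀ z' ∈ Facts n m, Connects n m N z z'} := by
    intro z hz z' hz'
    refine ⟨1, ![z, z'], by simp, by simp [Fin.last], ?_, ?_⟩
    · intro i
      fin_cases i
      · simpa using hz
      · simpa using hz'
    · intro i
      have hi : i = 0 := Subsingleton.elim _ _
      subst hi
      have hdzz : fDist z z' ≤ m := by
        have h3 : fLen z ≤ m := len_le_m a d k ha m z hz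
        have h4 : fLen z' ≤ m := len_le_m a d k ha m z' hz'
        unfold fDist
        omega
      simp only [Fin.castSucc_zero, Fin.succ_zero_eq_one, Matrix.cons_val_zero,
        Matrix.cons_val_one, Matrix.head_cons]
      exact hdzz
  have hcd : catDeg n m ∈ {N | ∀ z ∈ Facts n m, ∀ z' ∈ Facts n m, Connects n m N z z'} := by
    unfold catDeg
    exact Nat.sInf_mem ⟨m, hmemm⟩
  have hmon : catDeg n m ∈ {N | ∀ z ∈ Facts n m, ∀ z' ∈ Facts n m, ConnectsMon n m N z z'} := by
    intro z hz z' hz'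
    obtain ⟨t, f, h0, hl, hmemf, hstep⟩ := hcd z hz z' hz'
    have hconst := chain_len a d k ha hgcd hka m t (catDeg n m) hc2 f hmemf hstep
    refine ⟨t, f, h0, hl, hmemf, ?_, hstep⟩
    left
    intro i j hij
    simp only
    rw [hconst i, hconst j]
  have hle : catMon n m ≤ catDeg n m := by
    unfold catMon
    exact Nat.sInf_le hmon
  have hge : catDeg n m ≤ catMon n m := by
    have h1 : catMon n m ∈ {N | ∀ z ∈ Facts n m, ∀ z' ∈ Facts n m, ConnectsMon n m N z z'} := by
      unfold catMon
      exact Nat.sInf_mem ⟨_, hmon⟩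
    have h2 : catMon n m ∈ {N | ∀ z ∈ Facts n m, ∀ z' ∈ Facts n m, Connects n m N z z'} := by
      intro z hz z' hz'
      obtain ⟨t, f, a1, a2, a3, _, a5⟩ := h1 z hz z' hz'
      exact ⟨t, f, a1, a2, a3, a5⟩
    unfold catDeg
    exact Nat.sInf_le h2
  omega
end

section
/- Let M = ⟨a, ah+d, ah+2d⟩ be a generalized arithmetic numerical monoid of embedding dimension 3, where a, d are positive integers with gcd(a,d) = 1, h ≥ 2 is an integer, and a, ah+d, ah+2d is the minimal generating set of M. Then c_eq(M) = (ah + 2d − a)/gcd(h−1, d). -/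
section Aux

lemma funext3 {p q : Fin 3 → ℕ} (h0 : p 0 = q 0) (h1 : p 1 = q 1) (h2 : p 2 = q 2) :
    p = q := by
  funext i; fin_cases i <;> assumption

lemma fDist_comm' (p q : Fin 3 → ℕ) : fDist p q = fDist q p := by
  unfold fDist
  rw [max_comm]
  congr 1
  exact Finset.sum_congr rfl fun i _ => min_comm _ _

lemma dist_ge' (p q : Fin 3 → ℕ) (B c0 c1 c2 : ℕ) (h0 : q 0 = p 0 + c0)
    (h1 : q 1 + c1 = p 1) (h2 : q 2 = p 2 + c2) (hc : c1 = c0 + c2)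
    (hB : B ≤ c1) : B ≤ fDist p q := by
  simp only [fDist, fLen, Fin.sum_univ_three]
  omega

lemma exists_step' {t : ℕ} (f : Fin (t+1) → Fin 3 → ℕ) (hne : f 0 ≠ f (Fin.last t)) :
    ∃ i : Fin t, f i.castSucc ≠ f i.succ := by
  by_contra hcon
  push_neg at hcon
  apply hne
  have key : ∀ j : Fin (t+1), f j = f 0 := by
    intro j
    induction j using Fin.induction with
    | zero => rfl
    | succ i ih => rw [← hcon i]; exact ih
  exact (key (Fin.last t)).symm

theorem struct' (a d e : ℕ) (hd : 0 < d) (hgcd : Nat.gcd a d = 1)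
    (z z' : Fin 3 → ℕ) (m : ℕ)
    (hz : z 0 * a + z 1 * (a*(e+1)+d) + z 2 * (a*(e+1)+2*d) = m)
    (hz' : z' 0 * a + z' 1 * (a*(e+1)+d) + z' 2 * (a*(e+1)+2*d) = m)
    (hlen : z 0 + z 1 + z 2 = z' 0 + z' 1 + z' 2) :
    ∃ k : ℕ,
      (z' 0 = z 0 + k * (d / Nat.gcd e d)
        ∧ z' 1 + k * ((a*e+2*d)/Nat.gcd e d) = z 1
        ∧ z' 2 = z 2 + k * ((a*e+d)/Nat.gcd e d))
      ∨ (z 0 = z' 0 + k * (d / Nat.gcd e d)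
        ∧ z 1 + k * ((a*e+2*d)/Nat.gcd e d) = z' 1
        ∧ z 2 = z' 2 + k * ((a*e+d)/Nat.gcd e d)) := by
  set g := Nat.gcd e d with hg
  have hgpos : 0 < g := Nat.gcd_pos_of_pos_right e hd
  have hdD : g ∣ d := Nat.gcd_dvd_right e d
  have hdA : g ∣ a*e+d := dvd_add ((Nat.gcd_dvd_left e d).mul_left a) hdD
  have hdB : g ∣ a*e+2*d := dvd_add ((Nat.gcd_dvd_left e d).mul_left a) (hdD.mul_left 2)
  set D := d / g with hD
  set A := (a*e+d) / g with hA
  set B := (a*e+2*d) / g with hB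
  have hgD : g * D = d := Nat.mul_div_cancel' hdD
  have hgA : g * A = a*e+d := Nat.mul_div_cancel' hdA
  have hgB : g * B = a*e+2*d := Nat.mul_div_cancel' hdB
  have hBDA : B = D + A := by
    have h2 : g * B = g * (D + A) := by rw [Nat.mul_add, hgD, hgA, hgB]; ring
    exact Nat.eq_of_mul_eq_mul_left hgpos h2
  have hg2 : Nat.gcd (a*e+d) d = g := by
    rw [Nat.gcd_add_self_left, Nat.Coprime.gcd_mul_left_cancel e hgcd]
  have hAD : Nat.Coprime A D := by
    have := Nat.coprime_div_gcd_div_gcd (m := a*e+d) (n := d) (by rw [hg2]; exact hgpos)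
    rwa [hg2] at this
  have hAB : Nat.Coprime A B := by
    rw [hBDA]
    exact (Nat.coprime_add_self_right).mpr hAD
  have hApos : 0 < A := Nat.div_pos (Nat.le_of_dvd (by omega) hdA) hgpos
  have hzZ : (z 0 : ℤ)*a + z 1*(a*(e+1)+d) + z 2*(a*(e+1)+2*d) = m := by exact_mod_cast hz
  have hz'Z : (z' 0 : ℤ)*a + z' 1*(a*(e+1)+d) + z' 2*(a*(e+1)+2*d) = m := by exact_mod_cast hz'
  have hlenZ : (z 0 : ℤ) + z 1 + z 2 = z' 0 + z' 1 + z' 2 := by exact_mod_cast hlen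
  have hgAZ : (g : ℤ) * A = a*e+d := by exact_mod_cast hgA
  have hgBZ : (g : ℤ) * B = a*e+2*d := by exact_mod_cast hgB
  have hgDZ : (g : ℤ) * D = d := by exact_mod_cast hgD
  have key : ((z' 1 : ℤ) - z 1) * ((a:ℤ)*e+d) + ((z' 2 : ℤ) - z 2) * ((a:ℤ)*e+2*d) = 0 := by
    linear_combination hz'Z - hzZ + (a:ℤ) * hlenZ
  have key2 : ((z' 1 : ℤ) - z 1) * A + ((z' 2 : ℤ) - z 2) * B = 0 := by
    have hgne : (g:ℤ) ≠ 0 := by exact_mod_cast hgpos.ne'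
    have : (g:ℤ) * (((z' 1 : ℤ) - z 1) * A + ((z' 2 : ℤ) - z 2) * B) = 0 := by
      linear_combination key + ((z' 1 : ℤ) - z 1) * hgAZ + ((z' 2 : ℤ) - z 2) * hgBZ
    exact (mul_eq_zero.mp this).resolve_left hgne
  have hdvd : (A : ℤ) ∣ ((z' 2 : ℤ) - z 2) := by
    have hco : IsCoprime (A:ℤ) (B:ℤ) := Int.isCoprime_iff_gcd_eq_one.mpr (by exact_mod_cast hAB)
    exact hco.dvd_of_dvd_mul_right ⟨-((z' 1 : ℤ) - z 1), by linarith [key2]⟩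
  obtain ⟨q, hq⟩ := hdvd
  have hAne : (A:ℤ) ≠ 0 := by exact_mod_cast hApos.ne'
  have hw1 : (z' 1 : ℤ) - z 1 = -q * B := by
    have h3 : ((z' 1 : ℤ) - z 1) * A = (-q * B) * A := by linear_combination key2 - (B:ℤ) * hq
    exact mul_right_cancel₀ hAne h3
  have hw0 : (z' 0 : ℤ) - z 0 = q * D := by
    have hBDAZ : (B:ℤ) = D + A := by exact_mod_cast hBDA
    linear_combination (-1 : ℤ) * hlenZ - hw1 - hq + q * hBDAZ
  rcases le_or_gt 0 q with hq0 | hq0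
  · refine ⟨q.toNat, Or.inl ⟨?_, ?_, ?_⟩⟩
    · have : (z' 0 : ℤ) = z 0 + q.toNat * D := by rw [Int.toNat_of_nonneg hq0]; linarith
      exact_mod_cast this
    · have : (z' 1 : ℤ) + q.toNat * B = z 1 := by rw [Int.toNat_of_nonneg hq0]; linarith
      exact_mod_cast this
    · have : (z' 2 : ℤ) = z 2 + q.toNat * A := by rw [Int.toNat_of_nonneg hq0]; linarith
      exact_mod_cast this
  · refine ⟨(-q).toNat, Or.inr ⟨?_, ?_, ?_⟩⟩
    · have : (z 0 : ℤ) = z' 0 + (-q).toNat * D := by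
        rw [Int.toNat_of_nonneg (by omega : (0:ℤ) ≤ -q)]; linarith
      exact_mod_cast this
    · have : (z 1 : ℤ) + (-q).toNat * B = z' 1 := by
        rw [Int.toNat_of_nonneg (by omega : (0:ℤ) ≤ -q)]; linarith
      exact_mod_cast this
    · have : (z 2 : ℤ) = z' 2 + (-q).toNat * A := by
        rw [Int.toNat_of_nonneg (by omega : (0:ℤ) ≤ -q)]; linarith
      exact_mod_cast this

lemma connect_up' (aa n2 n3 m D A B : ℕ) (hBDA : B = D + A)
    (KI : B * n2 = D * aa + A * n3) (z z' : Fin 3 → ℕ) (k : ℕ)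
    (hz : z 0 * aa + z 1 * n2 + z 2 * n3 = m)
    (h0 : z' 0 = z 0 + k * D) (h1 : z' 1 + k * B = z 1) (h2 : z' 2 = z 2 + k * A) :
    ConnectsEq ![aa, n2, n3] m B z z' := by
  have hkB : k * B ≤ z 1 := by omega
  refine ⟨k, fun i => ![z 0 + i.val * D, z 1 - i.val * B, z 2 + i.val * A],
    ?_, ?_, ?_, ?_, ?_⟩
  · exact funext3 (by simp) (by simp) (by simp)
  · refine funext3 ?_ ?_ ?_ <;> simp [Fin.last] <;> omega
  · intro i
    have hik : i.val ≤ k := Nat.lt_succ_iff.mp i.isLt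
    have hle : i.val * B ≤ z 1 := le_trans (Nat.mul_le_mul_right B hik) hkB
    simp only [Facts, Set.mem_setOf_eq, Fin.sum_univ_three]
    simp only [Matrix.cons_val_zero, Matrix.cons_val_one, Matrix.head_cons,
      Matrix.cons_val_two, Matrix.tail_cons]
    have hzZ : (z 0 : ℤ)*aa + z 1*n2 + z 2*n3 = m := by exact_mod_cast hz
    have KIZ : (B:ℤ)*n2 = D*aa + A*n3 := by exact_mod_cast KI
    zify [hle]
    linear_combination hzZ - (i.val : ℤ) * KIZ
  · intro i
    have hik : i.val ≤ k := Nat.lt_succ_iff.mp i.isLt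
    have hle : i.val * B ≤ z 1 := le_trans (Nat.mul_le_mul_right B hik) hkB
    have hrel : i.val * B = i.val * D + i.val * A := by rw [hBDA, Nat.mul_add]
    simp only [fLen, Fin.sum_univ_three]
    simp only [Matrix.cons_val_zero, Matrix.cons_val_one, Matrix.head_cons,
      Matrix.cons_val_two, Matrix.tail_cons]
    omega
  · intro i
    have hik : i.val + 1 ≤ k := i.isLt
    have hle : (i.val + 1) * B ≤ z 1 := le_trans (Nat.mul_le_mul_right B hik) hkB
    have hr1 : (i.val + 1) * B = i.val * B + B := by rw [Nat.succ_mul]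
    have hr2 : (i.val + 1) * D = i.val * D + D := by rw [Nat.succ_mul]
    have hr3 : (i.val + 1) * A = i.val * A + A := by rw [Nat.succ_mul]
    simp only [fDist, fLen, Fin.sum_univ_three, Fin.coe_castSucc, Fin.val_succ]
    simp only [Matrix.cons_val_zero, Matrix.cons_val_one, Matrix.head_cons,
      Matrix.cons_val_two, Matrix.tail_cons]
    omega

lemma connect_down' (aa n2 n3 m D A B : ℕ) (hBDA : B = D + A)
    (KI : B * n2 = D * aa + A * n3) (z z' : Fin 3 → ℕ) (k : ℕ)
    (hz : z' 0 * aa + z' 1 * n2 + z' 2 * n3 = m)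
    (h0 : z 0 = z' 0 + k * D) (h1 : z 1 + k * B = z' 1) (h2 : z 2 = z' 2 + k * A) :
    ConnectsEq ![aa, n2, n3] m B z z' := by
  have hkD : k * D ≤ z 0 := by omega
  have hkA : k * A ≤ z 2 := by omega
  refine ⟨k, fun i => ![z 0 - i.val * D, z 1 + i.val * B, z 2 - i.val * A],
    ?_, ?_, ?_, ?_, ?_⟩
  · exact funext3 (by simp) (by simp) (by simp)
  · refine funext3 ?_ ?_ ?_ <;> simp [Fin.last] <;> omega
  · intro i
    have hik : i.val ≤ k := Nat.lt_succ_iff.mp i.isLt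
    have hleD : i.val * D ≤ z 0 := le_trans (Nat.mul_le_mul_right D hik) hkD
    have hleA : i.val * A ≤ z 2 := le_trans (Nat.mul_le_mul_right A hik) hkA
    simp only [Facts, Set.mem_setOf_eq, Fin.sum_univ_three]
    simp only [Matrix.cons_val_zero, Matrix.cons_val_one, Matrix.head_cons,
      Matrix.cons_val_two, Matrix.tail_cons]
    have hzZ : (z' 0 : ℤ)*aa + z' 1*n2 + z' 2*n3 = m := by exact_mod_cast hz
    have KIZ : (B:ℤ)*n2 = D*aa + A*n3 := by exact_mod_cast KI
    have hz0 : (z 0 : ℤ) = z' 0 + k * D := by exact_mod_cast h0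
    have hz1 : (z 1 : ℤ) + k * B = z' 1 := by exact_mod_cast h1
    have hz2 : (z 2 : ℤ) = z' 2 + k * A := by exact_mod_cast h2
    zify [hleD, hleA]
    linear_combination hzZ + (aa:ℤ) * hz0 + (n2:ℤ) * hz1 + (n3:ℤ) * hz2 + ((i.val:ℤ) - k) * KIZ
  · intro i
    have hik : i.val ≤ k := Nat.lt_succ_iff.mp i.isLt
    have hleD : i.val * D ≤ z 0 := le_trans (Nat.mul_le_mul_right D hik) hkD
    have hleA : i.val * A ≤ z 2 := le_trans (Nat.mul_le_mul_right A hik) hkA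
    have hrel : i.val * B = i.val * D + i.val * A := by rw [hBDA, Nat.mul_add]
    simp only [fLen, Fin.sum_univ_three]
    simp only [Matrix.cons_val_zero, Matrix.cons_val_one, Matrix.head_cons,
      Matrix.cons_val_two, Matrix.tail_cons]
    omega
  · intro i
    have hik : i.val + 1 ≤ k := i.isLt
    have hleD : (i.val + 1) * D ≤ z 0 := le_trans (Nat.mul_le_mul_right D hik) hkD
    have hleA : (i.val + 1) * A ≤ z 2 := le_trans (Nat.mul_le_mul_right A hik) hkA
    have hr1 : (i.val + 1) * B = i.val * B + B := by rw [Nat.succ_mul]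
    have hr2 : (i.val + 1) * D = i.val * D + D := by rw [Nat.succ_mul]
    have hr3 : (i.val + 1) * A = i.val * A + A := by rw [Nat.succ_mul]
    have hrel : B = D + A := hBDA
    simp only [fDist, fLen, Fin.sum_univ_three, Fin.coe_castSucc, Fin.val_succ]
    simp only [Matrix.cons_val_zero, Matrix.cons_val_one, Matrix.head_cons,
      Matrix.cons_val_two, Matrix.tail_cons]
    omega

end Aux

/-- For a generalized arithmetic numerical monoid
`M = ⟨a, ah+d, ah+2d⟩` of embedding dimension 3 (with `gcd(a,d)=1`, `h ≥ 2`,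
and the three generators minimal),
`c_eq(M) = (ah + 2d - a)/gcd(h-1, d)`. -/
theorem generalized_arithmetic_equivalent (a d h : ℕ) (ha : 0 < a) (hd : 0 < d)
    (hh : 2 ≤ h) (hgcd : Nat.gcd a d = 1)
    (hmin1 : ¬ ∃ u v : ℕ, u * (a * h + d) + v * (a * h + 2 * d) = a)
    (hmin2 : ¬ ∃ u v : ℕ, u * a + v * (a * h + 2 * d) = a * h + d)
    (hmin3 : ¬ ∃ u v : ℕ, u * a + v * (a * h + d) = a * h + 2 * d) :
    catEqM ![a, a * h + d, a * h + 2 * d] =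
      (a * h + 2 * d - a) / Nat.gcd (h - 1) d := by
  obtain ⟨e, rfl⟩ : ∃ e, h = e + 1 := ⟨h - 1, by omega⟩
  clear hh hmin1 hmin2 hmin3 ha
  set g := Nat.gcd e d with hg
  have hgpos : 0 < g := Nat.gcd_pos_of_pos_right e hd
  have hdD : g ∣ d := Nat.gcd_dvd_right e d
  have hdA : g ∣ a*e+d := dvd_add ((Nat.gcd_dvd_left e d).mul_left a) hdD
  have hdB : g ∣ a*e+2*d := dvd_add ((Nat.gcd_dvd_left e d).mul_left a) (hdD.mul_left 2)
  set D := d / g with hD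
  set A := (a*e+d) / g with hA
  set B := (a*e+2*d) / g with hB
  have hgD : g * D = d := Nat.mul_div_cancel' hdD
  have hgA : g * A = a*e+d := Nat.mul_div_cancel' hdA
  have hgB : g * B = a*e+2*d := Nat.mul_div_cancel' hdB
  have hBDA : B = D + A := by
    have h2 : g * B = g * (D + A) := by rw [Nat.mul_add, hgD, hgA, hgB]; ring
    exact Nat.eq_of_mul_eq_mul_left hgpos h2
  have KI : B * (a*(e+1)+d) = D * a + A * (a*(e+1)+2*d) := by
    apply Nat.eq_of_mul_eq_mul_left hgpos
    calc g * (B * (a*(e+1)+d)) = (g * B) * (a*(e+1)+d) := by ring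
    _ = (a*e+2*d) * (a*(e+1)+d) := by rw [hgB]
    _ = d * a + (a*e+d) * (a*(e+1)+2*d) := by ring
    _ = (g * D) * a + (g * A) * (a*(e+1)+2*d) := by rw [hgD, hgA]
    _ = g * (D * a + A * (a*(e+1)+2*d)) := by ring
  have factsIff : ∀ (m : ℕ) (z : Fin 3 → ℕ),
      z ∈ Facts ![a, a*(e+1)+d, a*(e+1)+2*d] m ↔
        z 0 * a + z 1 * (a*(e+1)+d) + z 2 * (a*(e+1)+2*d) = m := by
    intro m z; simp [Facts, Fin.sum_univ_three]
  have lenIff : ∀ z : Fin 3 → ℕ, fLen z = z 0 + z 1 + z 2 := by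
    intro z; simp [fLen, Fin.sum_univ_three]
  have UB : ∀ m : ℕ, B ∈ {N | ∀ z ∈ Facts ![a, a*(e+1)+d, a*(e+1)+2*d] m,
      ∀ z' ∈ Facts ![a, a*(e+1)+d, a*(e+1)+2*d] m, fLen z = fLen z' →
      ConnectsEq ![a, a*(e+1)+d, a*(e+1)+2*d] m N z z'} := by
    intro m z hzF z' hz'F hlen
    rw [factsIff m z] at hzF
    rw [factsIff m z'] at hz'F
    rw [lenIff z, lenIff z'] at hlen
    obtain ⟨k, hc | hc⟩ := struct' a d e hd hgcd z z' m hzF hz'F hlen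
    · exact connect_up' a (a*(e+1)+d) (a*(e+1)+2*d) m D A B hBDA KI z z' k hzF
        hc.1 hc.2.1 hc.2.2
    · exact connect_down' a (a*(e+1)+d) (a*(e+1)+2*d) m D A B hBDA KI z z' k hz'F
        hc.1 hc.2.1 hc.2.2
  have catEq_le : ∀ m : ℕ, catEq ![a, a*(e+1)+d, a*(e+1)+2*d] m ≤ B :=
    fun m => Nat.sInf_le (UB m)
  have hBpos : 0 < B := Nat.div_pos (Nat.le_of_dvd (by omega) hdB) hgpos
  set m0 := B * (a*(e+1)+d) with hm0
  have hzfF : ![D, 0, A] ∈ Facts ![a, a*(e+1)+d, a*(e+1)+2*d] m0 := by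
    rw [factsIff]
    simp only [Matrix.cons_val_zero, Matrix.cons_val_one, Matrix.head_cons,
      Matrix.cons_val_two, Matrix.tail_cons, zero_mul, add_zero]
    exact KI.symm
  have hz'fF : ![0, B, 0] ∈ Facts ![a, a*(e+1)+d, a*(e+1)+2*d] m0 := by
    rw [factsIff]
    simp only [Matrix.cons_val_zero, Matrix.cons_val_one, Matrix.head_cons,
      Matrix.cons_val_two, Matrix.tail_cons, zero_mul, add_zero, zero_add]
    exact hm0.symm
  have hlen0 : fLen ![D, 0, A] = fLen ![0, B, 0] := by
    rw [lenIff, lenIff]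
    simp only [Matrix.cons_val_zero, Matrix.cons_val_one, Matrix.head_cons,
      Matrix.cons_val_two, Matrix.tail_cons]
    omega
  have LB : B ≤ catEq ![a, a*(e+1)+d, a*(e+1)+2*d] m0 := by
    unfold catEq
    apply le_csInf ⟨B, UB m0⟩
    intro N hN
    obtain ⟨t, f, hf0, hfl, hmem, hlens, hstep⟩ := hN _ hzfF _ hz'fF hlen0
    have hne : f 0 ≠ f (Fin.last t) := by
      rw [hf0, hfl]
      intro hEq
      have h1 := congrFun hEq 1
      simp only [Matrix.cons_val_one, Matrix.head_cons, Matrix.cons_val_zero] at h1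
      omega
    obtain ⟨i, hnei⟩ := exists_step' f hne
    have hpF := (factsIff _ _).mp (hmem i.castSucc)
    have hqF := (factsIff _ _).mp (hmem i.succ)
    have e3 : fLen (f i.castSucc) = fLen (f i.succ) := (hlens _).trans (hlens _).symm
    rw [lenIff, lenIff] at e3
    obtain ⟨k, hc | hc⟩ := struct' a d e hd hgcd (f i.castSucc) (f i.succ) m0 hpF hqF e3
    · have hk : k ≠ 0 := by
        rintro rfl
        exact hnei (funext3 (by omega) (by omega) (by omega)).symm
      have hge : B ≤ fDist (f i.castSucc) (f i.succ) :=
        dist_ge' _ _ B (k*D) (k*B) (k*A) hc.1 hc.2.1 hc.2.2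
          (by rw [hBDA, Nat.mul_add]) (Nat.le_mul_of_pos_left B (by omega))
      exact le_trans hge (hstep i)
    · have hk : k ≠ 0 := by
        rintro rfl
        exact hnei (funext3 (by omega) (by omega) (by omega))
      have hge : B ≤ fDist (f i.succ) (f i.castSucc) :=
        dist_ge' _ _ B (k*D) (k*B) (k*A) hc.1 hc.2.1 hc.2.2
          (by rw [hBDA, Nat.mul_add]) (Nat.le_mul_of_pos_left B (by omega))
      have hcomm : fDist (f i.castSucc) (f i.succ) = fDist (f i.succ) (f i.castSucc) :=
        fDist_comm' _ _
      have := hstep i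
      omega
  have hEqm0 : catEq ![a, a*(e+1)+d, a*(e+1)+2*d] m0 = B :=
    le_antisymm (catEq_le m0) LB
  have hub : ∀ x ∈ catEq ![a, a*(e+1)+d, a*(e+1)+2*d] ''
      {m | (Facts ![a, a*(e+1)+d, a*(e+1)+2*d] m).Nonempty}, x ≤ B := by
    rintro x ⟨m, -, rfl⟩
    exact catEq_le m
  have hmm : B ∈ catEq ![a, a*(e+1)+d, a*(e+1)+2*d] ''
      {m | (Facts ![a, a*(e+1)+d, a*(e+1)+2*d] m).Nonempty} :=
    ⟨m0, ⟨![D, 0, A], hzfF⟩, hEqm0⟩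
  have hS : catEqM ![a, a*(e+1)+d, a*(e+1)+2*d] = B :=
    le_antisymm (csSup_le ⟨B, hmm⟩ hub) (le_csSup ⟨B, fun x hx => hub x hx⟩ hmm)
  rw [hS]
  have h1 : (e + 1) - 1 = e := rfl
  have h2 : a*(e+1)+2*d - a = a*e+2*d := by
    have h3 : a*(e+1) = a*e + a := by ring
    omega
  rw [h1, h2]
end
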